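/- arXiv:2103.03620 — 9 statements merged into one kernel-verified Lean document; each statement's English description precedes it below -/
import Mathlib

section
/- Two finite measures μ, μ' on ℝ with finite first moments are equal if and only if their potential functions coincide: μ = μ' ⇔ U_μ = U_{μ'}. -/
open MeasureTheory Set Filter Topology

noncomputable def potential (η : MeasureTheory.Measure ℝ) (x : ℝ) : ℝ := ∫ y, |y - x| ∂η

lemma intAbs (η : Measure ℝ) [IsFiniteMeasure η] (hη : Integrable (fun y => |y|) η)
    (x : ℝ) : Integrable (fun y => |y - x|) η := by
  refine (hη.add (integrable_const |x|)).mono'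
    ((continuous_id.sub continuous_const).abs.aestronglyMeasurable) ?_
  filter_upwards with y
  rw [Real.norm_eq_abs, abs_abs]
  exact abs_sub y x

lemma intId (η : Measure ℝ) [IsFiniteMeasure η] (hη : Integrable (fun y => |y|) η) :
    Integrable (fun y : ℝ => y) η := by
  refine hη.mono' continuous_id.aestronglyMeasurable ?_
  filter_upwards with y
  rw [Real.norm_eq_abs]

lemma intMax (η : Measure ℝ) [IsFiniteMeasure η] (hη : Integrable (fun y => |y|) η)
    (t : ℝ) : Integrable (fun y => max (t - y) 0) η := by
  refine (intAbs η hη t).mono'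
    (((continuous_const.sub continuous_id).max continuous_const).aestronglyMeasurable) ?_
  filter_upwards with y
  rw [Real.norm_eq_abs, abs_sub_comm y t]
  rcases le_total (t - y) 0 with h | h
  · rw [max_eq_right h]; simp
  · rw [max_eq_left h]

lemma tendstoA (η : Measure ℝ) [IsFiniteMeasure η] (hη : Integrable (fun y => |y|) η) :
    Tendsto (fun x : ℝ => potential η x + potential η (-x) - 2*x*(η Set.univ).toReal)
      atTop (𝓝 0) := by
  have key : Tendsto (fun x : ℝ => ∫ y, (|y - x| + |y + x| - 2*x) ∂η) atTop (𝓝 0) := by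
    have := tendsto_integral_filter_of_dominated_convergence (μ := η) (l := atTop)
      (F := fun (x : ℝ) (y : ℝ) => |y - x| + |y + x| - 2*x) (f := fun _ => 0)
      (bound := fun y => 2 * |y|)
      (Eventually.of_forall fun x =>
        (((continuous_id.sub continuous_const).abs.add
          (continuous_id.add continuous_const).abs).sub continuous_const).aestronglyMeasurable)
      ?_ (hη.const_mul 2) ?_
    · simpa using this
    · filter_upwards [eventually_ge_atTop (0:ℝ)] with x hx
      filter_upwards with y
      rw [Real.norm_eq_abs, abs_le]
      rcases abs_cases (y - x) with ⟨e1, _⟩ | ⟨e1, _⟩ <;>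
        rcases abs_cases (y + x) with ⟨e2, _⟩ | ⟨e2, _⟩ <;>
        rcases abs_cases y with ⟨e3, _⟩ | ⟨e3, _⟩ <;>
        constructor <;> linarith
    · filter_upwards with y
      have : ∀ᶠ x : ℝ in atTop, |y - x| + |y + x| - 2*x = 0 := by
        filter_upwards [eventually_ge_atTop |y|] with x hx
        have h1 : y - x ≤ 0 := by have := le_abs_self y; linarith
        have h2 : 0 ≤ y + x := by have := neg_abs_le y; linarith
        rw [abs_of_nonpos h1, abs_of_nonneg h2]; ring
      exact Tendsto.congr' (this.mono fun x hx => hx.symm) tendsto_const_nhds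
  refine Tendsto.congr (fun x => ?_) key
  have hpx : Integrable (fun y : ℝ => |y + x|) η := by
    simpa [sub_neg_eq_add] using intAbs η hη (-x)
  have hsum : Integrable (fun y : ℝ => |y - x| + |y + x|) η := (intAbs η hη x).add hpx
  rw [integral_sub hsum (integrable_const _),
    integral_add (intAbs η hη x) hpx,
    integral_const, smul_eq_mul]
  simp only [potential, sub_neg_eq_add, measureReal_def]
  ring

lemma tendstoB (η : Measure ℝ) [IsFiniteMeasure η] (hη : Integrable (fun y => |y|) η) :
    Tendsto (fun x : ℝ => potential η x - potential η (-x) + 2*(∫ y, y ∂η))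
      atTop (𝓝 0) := by
  have key : Tendsto (fun x : ℝ => ∫ y, (|y - x| - |y + x| + 2*y) ∂η) atTop (𝓝 0) := by
    have := tendsto_integral_filter_of_dominated_convergence (μ := η) (l := atTop)
      (F := fun (x : ℝ) (y : ℝ) => |y - x| - |y + x| + 2*y) (f := fun _ => 0)
      (bound := fun y => 4 * |y|)
      (Eventually.of_forall fun x =>
        ((((continuous_id.sub continuous_const).abs.sub
          (continuous_id.add continuous_const).abs).add
          (continuous_const.mul continuous_id)).aestronglyMeasurable))
      ?_ (hη.const_mul 4) ?_
    · simpa using this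
    · filter_upwards with x
      filter_upwards with y
      rw [Real.norm_eq_abs, abs_le]
      rcases abs_cases (y - x) with ⟨e1, _⟩ | ⟨e1, _⟩ <;>
        rcases abs_cases (y + x) with ⟨e2, _⟩ | ⟨e2, _⟩ <;>
        rcases abs_cases y with ⟨e3, _⟩ | ⟨e3, _⟩ <;>
        constructor <;> linarith
    · filter_upwards with y
      have : ∀ᶠ x : ℝ in atTop, |y - x| - |y + x| + 2*y = 0 := by
        filter_upwards [eventually_ge_atTop |y|] with x hx
        have h1 : y - x ≤ 0 := by have := le_abs_self y; linarith
        have h2 : 0 ≤ y + x := by have := neg_abs_le y; linarith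
        rw [abs_of_nonpos h1, abs_of_nonneg h2]; ring
      exact Tendsto.congr' (this.mono fun x hx => hx.symm) tendsto_const_nhds
  refine Tendsto.congr (fun x => ?_) key
  have hpx : Integrable (fun y : ℝ => |y + x|) η := by
    simpa [sub_neg_eq_add] using intAbs η hη (-x)
  have hdiff : Integrable (fun y : ℝ => |y - x| - |y + x|) η := (intAbs η hη x).sub hpx
  have h2y : Integrable (fun y : ℝ => 2 * y) η := (intId η hη).const_mul 2
  rw [integral_add hdiff h2y,
    integral_sub (intAbs η hη x) hpx,
    integral_const_mul]
  simp only [potential, sub_neg_eq_add]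

noncomputable def Gf (η : Measure ℝ) (t : ℝ) : ℝ := ∫ y, max (t - y) 0 ∂η

lemma Gf_eq (η : Measure ℝ) [IsFiniteMeasure η] (hη : Integrable (fun y => |y|) η) (t : ℝ) :
    Gf η t = (potential η t + t * (η Set.univ).toReal - ∫ y, y ∂η) / 2 := by
  have hpt : ∀ y : ℝ, max (t - y) 0 = (|y - t| + (t - y)) / 2 := by
    intro y
    rcases le_total t y with h | h
    · rw [max_eq_right (by linarith), abs_of_nonneg (by linarith)]; ring
    · rw [max_eq_left (by linarith), abs_of_nonpos (by linarith)]; ring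
  unfold Gf
  simp_rw [hpt]
  have hsub : Integrable (fun y : ℝ => t - y) η := (integrable_const t).sub (intId η hη)
  have hadd : Integrable (fun y : ℝ => |y - t| + (t - y)) η := (intAbs η hη t).add hsub
  rw [integral_div, integral_add (intAbs η hη t) hsub,
    integral_sub (integrable_const t) (intId η hη), integral_const, smul_eq_mul]
  simp only [potential, measureReal_def]
  ring

lemma maxDiff (a c : ℝ) (hc : 0 ≤ c) :
    0 ≤ max (a + c) 0 - max a 0 ∧ max (a + c) 0 - max a 0 ≤ c := by
  constructor
  · exact sub_nonneg.2 (max_le_max (by linarith) le_rfl)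
  · have h : max (a + c) 0 ≤ max a 0 + c :=
      max_le (by linarith [le_max_left a 0]) (by positivity)
    linarith

lemma tendstoC (η : Measure ℝ) [IsFiniteMeasure η] (hη : Integrable (fun y => |y|) η)
    (x : ℝ) :
    Tendsto (fun n : ℕ => (n:ℝ) * (Gf η (x + (n:ℝ)⁻¹) - Gf η x))
      atTop (𝓝 ((η (Iic x)).toReal)) := by
  have key := tendsto_integral_filter_of_dominated_convergence (μ := η) (l := atTop)
    (F := fun (n : ℕ) (y : ℝ) => (n:ℝ) * (max (x + (n:ℝ)⁻¹ - y) 0 - max (x - y) 0))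
    (f := (Iic x).indicator (fun _ => (1:ℝ)))
    (bound := fun _ => 1)
    (Eventually.of_forall fun n =>
      (continuous_const.mul (((continuous_const.sub continuous_id).max
        continuous_const).sub ((continuous_const.sub continuous_id).max
        continuous_const))).aestronglyMeasurable)
    ?_ (integrable_const 1) ?_
  · have heq : ∫ y, (Iic x).indicator (fun _ => (1:ℝ)) y ∂η = (η (Iic x)).toReal := by
      rw [integral_indicator measurableSet_Iic, setIntegral_const, smul_eq_mul, mul_one, measureReal_def]
    rw [heq] at key
    refine Tendsto.congr (fun n => ?_) key
    rw [integral_const_mul, integral_sub (intMax η hη _) (intMax η hη x)]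
    rfl
  · filter_upwards [eventually_ge_atTop 1] with n hn
    filter_upwards with y
    have hc : (0:ℝ) ≤ (n:ℝ)⁻¹ := by positivity
    have hd := maxDiff (x - y) ((n:ℝ)⁻¹) hc
    have harg : x + (n:ℝ)⁻¹ - y = (x - y) + (n:ℝ)⁻¹ := by ring
    have hF0 : (0:ℝ) ≤ (n:ℝ) * (max ((x - y) + (n:ℝ)⁻¹) 0 - max (x - y) 0) :=
      mul_nonneg (Nat.cast_nonneg n) hd.1
    rw [Real.norm_eq_abs, harg, abs_of_nonneg hF0]
    calc (n:ℝ) * (max ((x - y) + (n:ℝ)⁻¹) 0 - max (x - y) 0)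
        ≤ (n:ℝ) * (n:ℝ)⁻¹ := by
          exact mul_le_mul_of_nonneg_left hd.2 (by positivity)
      _ = 1 := by
          rw [mul_inv_cancel₀]
          exact_mod_cast Nat.one_le_iff_ne_zero.mp hn
  · filter_upwards with y
    rcases le_or_gt y x with hy | hy
    · have : ∀ᶠ n : ℕ in atTop,
          (n:ℝ) * (max (x + (n:ℝ)⁻¹ - y) 0 - max (x - y) 0) = 1 := by
        filter_upwards [eventually_ge_atTop 1] with n hn
        have hn0 : (n:ℝ) ≠ 0 := by exact_mod_cast Nat.one_le_iff_ne_zero.mp hn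
        have hc : (0:ℝ) ≤ (n:ℝ)⁻¹ := by positivity
        rw [max_eq_left (by linarith), max_eq_left (by linarith),
          show x + (n:ℝ)⁻¹ - y - (x - y) = (n:ℝ)⁻¹ from by ring]
        exact mul_inv_cancel₀ hn0
      rw [indicator_of_mem (mem_Iic.2 hy)]
      exact Tendsto.congr' (this.mono fun n hn => hn.symm) tendsto_const_nhds
    · have hlt : (0:ℝ) < y - x := by linarith
      have hto : Tendsto (fun n : ℕ => ((n:ℝ))⁻¹) atTop (𝓝 0) :=
        tendsto_inv_atTop_nhds_zero_nat
      have hev : ∀ᶠ n : ℕ in atTop, ((n:ℝ))⁻¹ < y - x :=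
        hto.eventually_lt_const hlt
      have : ∀ᶠ n : ℕ in atTop,
          (n:ℝ) * (max (x + (n:ℝ)⁻¹ - y) 0 - max (x - y) 0) = 0 := by
        filter_upwards [hev] with n hn
        rw [max_eq_right (by linarith), max_eq_right (by linarith)]
        ring
      rw [indicator_of_notMem (by simpa using hy.not_ge)]
      exact Tendsto.congr' (this.mono fun n hn => hn.symm) tendsto_const_nhds

theorem measure_eq_iff_potential_eq
    (μ μ' : Measure ℝ) [IsFiniteMeasure μ] [IsFiniteMeasure μ']
    (hμ : Integrable (fun y => |y|) μ) (hμ' : Integrable (fun y => |y|) μ') :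
    μ = μ' ↔ potential μ = potential μ' := by
  constructor
  · rintro rfl; rfl
  · intro h
    have hU : ∀ x, potential μ x = potential μ' x := fun x => congrFun h x
    -- masses agree
    have h1 : Tendsto (fun x : ℝ =>
        2*x*((μ' Set.univ).toReal - (μ Set.univ).toReal)) atTop (𝓝 0) := by
      have := (tendstoA μ hμ).sub (tendstoA μ' hμ')
      simp only [sub_zero] at this
      refine Tendsto.congr (fun x => ?_) (by simpa using this)
      rw [hU x, hU (-x)]; ring
    have hm : (μ Set.univ).toReal = (μ' Set.univ).toReal := by
      have h2 := h1.mul tendsto_inv_atTop_zero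
      simp only [mul_zero] at h2
      have h3 : (fun x : ℝ => 2*x*((μ' Set.univ).toReal - (μ Set.univ).toReal) * x⁻¹)
          =ᶠ[atTop] fun _ => 2*((μ' Set.univ).toReal - (μ Set.univ).toReal) := by
        filter_upwards [eventually_gt_atTop (0:ℝ)] with x hx
        field_simp
      have := tendsto_nhds_unique (h2.congr' h3) tendsto_const_nhds
      linarith
    -- means agree
    have hI : (∫ y, y ∂μ) = ∫ y, y ∂μ' := by
      have h4 : Tendsto (fun _ : ℝ => 2*(∫ y, y ∂μ) - 2*(∫ y, y ∂μ')) atTop (𝓝 0) := by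
        have := (tendstoB μ hμ).sub (tendstoB μ' hμ')
        simp only [sub_zero] at this
        refine Tendsto.congr (fun x => ?_) (by simpa using this)
        rw [hU x, hU (-x)]; ring
      have := tendsto_nhds_unique h4 tendsto_const_nhds
      linarith
    have hG : ∀ t, Gf μ t = Gf μ' t := by
      intro t
      rw [Gf_eq μ hμ, Gf_eq μ' hμ', hU, hm, hI]
    refine Measure.ext_of_Iic μ μ' fun x => ?_
    have hC := tendstoC μ hμ x
    have hC' := tendstoC μ' hμ' x
    have heq : (μ (Iic x)).toReal = (μ' (Iic x)).toReal := by
      refine tendsto_nhds_unique (Tendsto.congr (fun n => ?_) hC) hC'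
      rw [hG, hG]
    exact (ENNReal.toReal_eq_toReal_iff' (measure_ne_top μ _) (measure_ne_top μ' _)).mp heq
end

section
/- For finite measures μ, ν on ℝ with finite first moments and equal total mass, μ is smaller than ν in convex order (∫φ dμ ≤ ∫φ dν for all convex φ : ℝ → ℝ) if and only if U_μ(x) ≤ U_ν(x) for all x ∈ ℝ. -/
open MeasureTheory Set Filter Topology

/-- Convex order: `∫ φ dμ ≤ ∫ φ dν` for all convex `φ` for which both integrals exist. -/
def ConvexOrder (μ ν : MeasureTheory.Measure ℝ) : Prop :=
  ∀ φ : ℝ → ℝ, ConvexOn ℝ Set.univ φ → MeasureTheory.Integrable φ μ →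
    MeasureTheory.Integrable φ ν → ∫ x, φ x ∂μ ≤ ∫ x, φ x ∂ν

open scoped ENNReal NNReal

set_option linter.unusedSectionVars false

section Aux

variable {φ : ℝ → ℝ}


noncomputable def rd (φ : ℝ → ℝ) (t : ℝ) : ℝ := sInf (slope φ t '' Ioi t)

lemma slope_monoIoi (hφ : ConvexOn ℝ univ φ) (t : ℝ) : MonotoneOn (slope φ t) (Ioi t) :=
  (hφ.slope_mono (mem_univ t)).mono (by intro u hu; exact ⟨mem_univ _, ne_of_gt hu⟩)

lemma slope_le_slope_of_lt (hφ : ConvexOn ℝ univ φ) {s t u : ℝ} (hst : s < t) (htu : t < u) :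
    slope φ t s ≤ slope φ t u := by
  exact (hφ.slope_mono (mem_univ t)) ⟨mem_univ _, hst.ne⟩
    ⟨mem_univ _, htu.ne'⟩ (hst.trans htu).le

lemma bddBelow_slope (hφ : ConvexOn ℝ univ φ) (t : ℝ) : BddBelow (slope φ t '' Ioi t) := by
  refine ⟨slope φ t (t - 1), ?_⟩
  rintro x ⟨u, hu, rfl⟩
  exact slope_le_slope_of_lt hφ (by linarith) hu

lemma rd_le_slope (hφ : ConvexOn ℝ univ φ) {t u : ℝ} (h : t < u) : rd φ t ≤ slope φ t u :=
  csInf_le (bddBelow_slope hφ t) (mem_image_of_mem _ h)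

lemma slope_le_rd (hφ : ConvexOn ℝ univ φ) {s t : ℝ} (h : s < t) : slope φ t s ≤ rd φ t := by
  refine le_csInf (by exact ⟨slope φ t (t + 1), mem_image_of_mem _ (by simp [lt_add_one t])⟩) ?_
  rintro x ⟨u, hu, rfl⟩
  exact slope_le_slope_of_lt hφ h hu

lemma rd_mono (hφ : ConvexOn ℝ univ φ) : Monotone (rd φ) := by
  intro s t hst
  rcases eq_or_lt_of_le hst with rfl | h
  · exact le_refl _
  calc rd φ s ≤ slope φ s t := rd_le_slope hφ h
    _ = slope φ t s := slope_comm φ s t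
    _ ≤ rd φ t := slope_le_rd hφ h

lemma hasDerivWithinAt_rd (hφ : ConvexOn ℝ univ φ) (t : ℝ) :
    HasDerivWithinAt φ (rd φ t) (Ioi t) t := by
  rw [hasDerivWithinAt_iff_tendsto_slope]
  have : Ioi t \ {t} = Ioi t := by simp
  rw [this]
  exact (slope_monoIoi hφ t).tendsto_nhdsGT (bddBelow_slope hφ t)

lemma integral_rd (hφ : ConvexOn ℝ univ φ) {a b : ℝ} (hab : a ≤ b) :
    ∫ t in a..b, rd φ t = φ b - φ a := by
  refine intervalIntegral.integral_eq_sub_of_hasDeriv_right_of_le hab ?_ ?_ ?_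
  · exact ((hφ.continuousOn isOpen_univ).mono (subset_univ _))
  · exact fun x _ => hasDerivWithinAt_rd hφ x
  · exact (rd_mono hφ).intervalIntegrable

noncomputable def SF (hφ : ConvexOn ℝ univ φ) : StieltjesFunction ℝ := (rd_mono hφ).stieltjesFunction

lemma rd_ae_eq (hφ : ConvexOn ℝ univ φ) : rd φ =ᵐ[volume] SF hφ := by
  have hsub : {t | rd φ t ≠ SF hφ t} ⊆ {t | ¬ ContinuousAt (rd φ) t} := by
    intro t ht hcont
    apply ht
    have : Function.rightLim (rd φ) t = rd φ t := by
      refine rightLim_eq_of_tendsto ?_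
      · exact hcont.continuousWithinAt.tendsto
    exact ((rd_mono hφ).stieltjesFunction_eq t).trans this |>.symm
  have hc : Set.Countable {t | rd φ t ≠ SF hφ t} :=
    ((rd_mono hφ).countable_not_continuousAt).mono hsub
  exact (hc.measure_zero volume)

lemma integral_SF (hφ : ConvexOn ℝ univ φ) {a b : ℝ} (hab : a ≤ b) :
    ∫ t in a..b, SF hφ t = φ b - φ a := by
  rw [← integral_rd hφ hab]
  exact intervalIntegral.integral_congr_ae ((rd_ae_eq hφ).mono (fun x h _ => h.symm))

noncomputable def kern (s y : ℝ) : ℝ := if 0 < s then max (y - s) 0 else max (s - y) 0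

lemma kern_nonneg (s y : ℝ) : 0 ≤ kern s y := by unfold kern; split <;> exact le_max_right _ _

lemma ofReal_max_zero (a : ℝ) : ENNReal.ofReal (max a 0) = ENNReal.ofReal a := by
  rcases le_total a 0 with h | h
  · simp [max_eq_right h, ENNReal.ofReal_of_nonpos h]
  · simp [max_eq_left h]

lemma measurable_kern_pair : Measurable (fun p : ℝ × ℝ => ENNReal.ofReal (kern p.1 p.2)) := by
  apply Measurable.ennreal_ofReal
  unfold kern
  exact Measurable.ite (measurableSet_lt measurable_const measurable_fst)
    ((measurable_snd.sub measurable_fst).max measurable_const)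
    ((measurable_fst.sub measurable_snd).max measurable_const)

lemma psi_eq_setIntegral (hφ : ConvexOn ℝ univ φ) (y : ℝ) :
    φ y - φ 0 - SF hφ 0 * y =
      if 0 ≤ y then ∫ t in Ioc 0 y, (SF hφ t - SF hφ 0)
      else ∫ t in Ioc y 0, (SF hφ 0 - SF hφ t) := by
  have hint : ∀ a b : ℝ, IntegrableOn (fun t => SF hφ t) (Ioc a b) volume := by
    intro a b
    rcases le_total a b with h | h
    · exact (intervalIntegrable_iff_integrableOn_Ioc_of_le h).mp ((SF hφ).mono.intervalIntegrable)
    · rw [Ioc_eq_empty (not_lt.2 h)]; exact integrableOn_empty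
  split_ifs with hy
  · have h0 : ∫ t in Ioc 0 y, (SF hφ t - SF hφ 0) =
        (∫ t in Ioc 0 y, SF hφ t) - (∫ t in Ioc 0 y, (SF hφ 0 : ℝ)) :=
      integral_sub (hint 0 y) (integrableOn_const measure_Ioc_lt_top.ne)
    have h1 : ∫ t in Ioc 0 y, SF hφ t = φ y - φ 0 := by
      rw [← intervalIntegral.integral_of_le hy]; exact integral_SF hφ hy
    have h2 : ∫ t in Ioc 0 y, (SF hφ 0 : ℝ) = SF hφ 0 * y := by
      rw [setIntegral_const]
      simp [Real.volume_Ioc, ENNReal.toReal_ofReal hy, mul_comm, hy]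
    rw [h0, h1, h2]
  · push_neg at hy
    have h0 : ∫ t in Ioc y 0, (SF hφ 0 - SF hφ t) =
        (∫ t in Ioc y 0, (SF hφ 0 : ℝ)) - (∫ t in Ioc y 0, SF hφ t) :=
      integral_sub (integrableOn_const measure_Ioc_lt_top.ne) (hint y 0)
    have h1 : ∫ t in Ioc y 0, SF hφ t = φ 0 - φ y := by
      rw [← intervalIntegral.integral_of_le hy.le]; exact integral_SF hφ hy.le
    have h2 : ∫ t in Ioc y 0, (SF hφ 0 : ℝ) = - (SF hφ 0 * y) := by
      rw [setIntegral_const]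
      simp only [Real.volume_Ioc, sub_zero, smul_eq_mul]
      rw [Real.volume_real_Ioc_of_le hy.le]
      ring
    rw [h0, h1, h2]
    ring

lemma psi_nonneg (hφ : ConvexOn ℝ univ φ) (y : ℝ) : 0 ≤ φ y - φ 0 - SF hφ 0 * y := by
  rw [psi_eq_setIntegral hφ y]
  split_ifs with hy
  · exact setIntegral_nonneg measurableSet_Ioc
      (fun t ht => sub_nonneg.2 ((SF hφ).mono ht.1.le))
  · exact setIntegral_nonneg measurableSet_Ioc
      (fun t ht => sub_nonneg.2 ((SF hφ).mono ht.2))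

lemma rep (hφ : ConvexOn ℝ univ φ) (y : ℝ) :
    ENNReal.ofReal (φ y - φ 0 - SF hφ 0 * y) =
      ∫⁻ s, ENNReal.ofReal (kern s y) ∂(SF hφ).measure := by
  set γ := (SF hφ).measure with hγ
  rcases le_or_gt 0 y with hy | hy
  · have hLHS : ENNReal.ofReal (φ y - φ 0 - SF hφ 0 * y) =
        ∫⁻ t in Ioc 0 y, γ (Ioc 0 t) ∂(volume : Measure ℝ) := by
      rw [psi_eq_setIntegral hφ y, if_pos hy]
      rw [ofReal_integral_eq_lintegral_ofReal]
      · refine setLIntegral_congr_fun measurableSet_Ioc (fun t ht => ?_)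
        rw [hγ, StieltjesFunction.measure_Ioc]
      · rcases le_or_gt y 0 with h | h
        · rw [Ioc_eq_empty (not_lt.2 h)]; exact integrableOn_empty
        · have := ((SF hφ).mono.intervalIntegrable (μ := volume) (a := 0) (b := y))
          rw [intervalIntegrable_iff_integrableOn_Ioc_of_le hy] at this
          exact this.sub (integrableOn_const measure_Ioc_lt_top.ne)
      · exact (ae_restrict_iff' measurableSet_Ioc).2 (ae_of_all _ fun t ht =>
          sub_nonneg.2 ((SF hφ).mono ht.1.le))
    set S : Set (ℝ × ℝ) := {p | 0 < p.1 ∧ p.1 ≤ p.2 ∧ p.2 < y} with hS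
    have hSmeas : MeasurableSet S :=
      (measurableSet_lt measurable_const measurable_fst).inter
        ((measurableSet_le measurable_fst measurable_snd).inter
          (measurableSet_lt measurable_snd measurable_const))
    set ind : ℝ × ℝ → ℝ≥0∞ := S.indicator (fun _ => (1 : ℝ≥0∞)) with hind
    have step1 : ∀ s, ENNReal.ofReal (kern s y) =
        ∫⁻ t, ind (s, t) ∂(volume : Measure ℝ) := by
      intro s
      by_cases hs : 0 < s
      · have heq : (fun t => ind (s, t)) =
            (Ico s y).indicator (fun _ => (1 : ℝ≥0∞)) := by
          funext t
          by_cases ht : t ∈ Ico s y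
          · rw [hind, indicator_of_mem ht, indicator_of_mem (by exact ⟨hs, ht.1, ht.2⟩)]
          · rw [hind, indicator_of_notMem ht, indicator_of_notMem
              (fun h => ht ⟨h.2.1, h.2.2⟩)]
        rw [heq, lintegral_indicator measurableSet_Ico, lintegral_one,
          Measure.restrict_apply_univ, Real.volume_Ico, kern, if_pos hs, ofReal_max_zero]
      · have heq : (fun t => ind (s, t)) = fun _ => 0 := by
          funext t
          exact indicator_of_notMem (fun h => hs h.1) _
        rw [heq, lintegral_zero, kern, if_neg hs]
        rw [max_eq_right (by push_neg at hs; linarith), ENNReal.ofReal_zero]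
    have step3 : ∀ t : ℝ, (∫⁻ s, ind (s, t) ∂γ) =
        (Iio y).indicator (fun u => γ (Ioc 0 u)) t := by
      intro t
      by_cases ht : t < y
      · have heq : (fun s => ind (s, t)) =
            (Ioc 0 t).indicator (fun _ => (1 : ℝ≥0∞)) := by
          funext s
          by_cases hst : s ∈ Ioc 0 t
          · rw [hind, indicator_of_mem hst, indicator_of_mem (by exact ⟨hst.1, hst.2, ht⟩)]
          · rw [hind, indicator_of_notMem hst, indicator_of_notMem
              (fun h => hst ⟨h.1, h.2.1⟩)]
        rw [heq, lintegral_indicator measurableSet_Ioc, lintegral_one,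
          Measure.restrict_apply_univ, indicator_of_mem (mem_Iio.2 ht)]
      · have heq : (fun s => ind (s, t)) = fun _ => 0 := by
          funext s
          exact indicator_of_notMem (fun h => ht h.2.2) _
        rw [heq, lintegral_zero, indicator_of_notMem (fun h => ht (mem_Iio.1 h))]
    calc ENNReal.ofReal (φ y - φ 0 - SF hφ 0 * y)
        = ∫⁻ t in Ioc 0 y, γ (Ioc 0 t) ∂(volume : Measure ℝ) := hLHS
      _ = ∫⁻ t in Ioo 0 y, γ (Ioc 0 t) ∂(volume : Measure ℝ) :=
          (setLIntegral_congr Ioo_ae_eq_Ioc).symm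
      _ = ∫⁻ t, (Iio y).indicator (fun u => γ (Ioc 0 u)) t ∂(volume : Measure ℝ) := by
          rw [← lintegral_indicator measurableSet_Ioo]
          refine lintegral_congr fun t => ?_
          by_cases h0 : t ∈ Ioo 0 y
          · rw [indicator_of_mem h0, indicator_of_mem (mem_Iio.2 h0.2)]
          · rw [indicator_of_notMem h0]
            by_cases h1 : t < y
            · rw [indicator_of_mem (mem_Iio.2 h1)]
              have ht0 : t ≤ 0 := by
                by_contra h2
                exact h0 ⟨lt_of_not_ge h2, h1⟩
              rw [Ioc_eq_empty (not_lt.2 ht0), measure_empty]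
            · rw [indicator_of_notMem (fun h => h1 (mem_Iio.1 h))]
      _ = ∫⁻ t, ∫⁻ s, ind (s, t) ∂γ ∂(volume : Measure ℝ) :=
          lintegral_congr fun t => (step3 t).symm
      _ = ∫⁻ s, ∫⁻ t, ind (s, t) ∂(volume : Measure ℝ) ∂γ := by
          refine (lintegral_lintegral_swap ?_).symm
          exact (measurable_const.indicator hSmeas).aemeasurable
      _ = ∫⁻ s, ENNReal.ofReal (kern s y) ∂γ := lintegral_congr fun s => (step1 s).symm
  · have hLHS : ENNReal.ofReal (φ y - φ 0 - SF hφ 0 * y) =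
        ∫⁻ t in Ioc y 0, γ (Ioc t 0) ∂(volume : Measure ℝ) := by
      rw [psi_eq_setIntegral hφ y, if_neg (not_le.2 hy)]
      rw [ofReal_integral_eq_lintegral_ofReal]
      · refine setLIntegral_congr_fun measurableSet_Ioc (fun t ht => ?_)
        rw [hγ, StieltjesFunction.measure_Ioc]
      · have := ((SF hφ).mono.intervalIntegrable (μ := volume) (a := y) (b := 0))
        rw [intervalIntegrable_iff_integrableOn_Ioc_of_le hy.le] at this
        exact (integrableOn_const measure_Ioc_lt_top.ne).sub this
      · exact (ae_restrict_iff' measurableSet_Ioc).2 (ae_of_all _ fun t ht =>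
          sub_nonneg.2 ((SF hφ).mono ht.2))
    set S : Set (ℝ × ℝ) := {p | ¬ 0 < p.1 ∧ y ≤ p.2 ∧ p.2 < p.1} with hS
    have hSmeas : MeasurableSet S :=
      ((measurableSet_lt measurable_const measurable_fst).compl).inter
        ((measurableSet_le measurable_const measurable_snd).inter
          (measurableSet_lt measurable_snd measurable_fst))
    set ind : ℝ × ℝ → ℝ≥0∞ := S.indicator (fun _ => (1 : ℝ≥0∞)) with hind
    have step1 : ∀ s, ENNReal.ofReal (kern s y) =
        ∫⁻ t, ind (s, t) ∂(volume : Measure ℝ) := by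
      intro s
      by_cases hs : 0 < s
      · have heq : (fun t => ind (s, t)) = fun _ => 0 := by
          funext t
          exact indicator_of_notMem (fun h => h.1 hs) _
        rw [heq, lintegral_zero, kern, if_pos hs]
        rw [max_eq_right (by linarith), ENNReal.ofReal_zero]
      · have heq : (fun t => ind (s, t)) =
            (Ico y s).indicator (fun _ => (1 : ℝ≥0∞)) := by
          funext t
          by_cases ht : t ∈ Ico y s
          · rw [hind, indicator_of_mem ht, indicator_of_mem (by exact ⟨hs, ht.1, ht.2⟩)]
          · rw [hind, indicator_of_notMem ht, indicator_of_notMem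
              (fun h => ht ⟨h.2.1, h.2.2⟩)]
        rw [heq, lintegral_indicator measurableSet_Ico, lintegral_one,
          Measure.restrict_apply_univ, Real.volume_Ico, kern, if_neg hs, ofReal_max_zero]
    have step3 : ∀ t : ℝ, (∫⁻ s, ind (s, t) ∂γ) =
        (Ici y).indicator (fun u => γ (Ioc u 0)) t := by
      intro t
      by_cases ht : y ≤ t
      · have heq : (fun s => ind (s, t)) =
            (Ioc t 0).indicator (fun _ => (1 : ℝ≥0∞)) := by
          funext s
          by_cases hst : s ∈ Ioc t 0
          · rw [hind, indicator_of_mem hst,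
              indicator_of_mem (by exact ⟨not_lt.2 hst.2, ht, hst.1⟩)]
          · rw [hind, indicator_of_notMem hst, indicator_of_notMem
              (fun h => hst ⟨h.2.2, not_lt.1 h.1⟩)]
        rw [heq, lintegral_indicator measurableSet_Ioc, lintegral_one,
          Measure.restrict_apply_univ, indicator_of_mem (mem_Ici.2 ht)]
      · have heq : (fun s => ind (s, t)) = fun _ => 0 := by
          funext s
          exact indicator_of_notMem (fun h => ht h.2.1) _
        rw [heq, lintegral_zero, indicator_of_notMem (fun h => ht (mem_Ici.1 h))]
    calc ENNReal.ofReal (φ y - φ 0 - SF hφ 0 * y)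
        = ∫⁻ t in Ioc y 0, γ (Ioc t 0) ∂(volume : Measure ℝ) := hLHS
      _ = ∫⁻ t in Ioo y 0, γ (Ioc t 0) ∂(volume : Measure ℝ) :=
          (setLIntegral_congr Ioo_ae_eq_Ioc).symm
      _ = ∫⁻ t in Ico y 0, γ (Ioc t 0) ∂(volume : Measure ℝ) :=
          setLIntegral_congr Ioo_ae_eq_Ico
      _ = ∫⁻ t, (Ici y).indicator (fun u => γ (Ioc u 0)) t ∂(volume : Measure ℝ) := by
          rw [← lintegral_indicator measurableSet_Ico]
          refine lintegral_congr fun t => ?_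
          by_cases h0 : t ∈ Ico y 0
          · rw [indicator_of_mem h0, indicator_of_mem (mem_Ici.2 h0.1)]
          · rw [indicator_of_notMem h0]
            by_cases h1 : y ≤ t
            · rw [indicator_of_mem (mem_Ici.2 h1)]
              have ht0 : 0 ≤ t := by
                by_contra h2
                exact h0 ⟨h1, lt_of_not_ge h2⟩
              rw [Ioc_eq_empty (not_lt.2 ht0), measure_empty]
            · rw [indicator_of_notMem (fun h => h1 (mem_Ici.1 h))]
      _ = ∫⁻ t, ∫⁻ s, ind (s, t) ∂γ ∂(volume : Measure ℝ) :=
          lintegral_congr fun t => (step3 t).symm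
      _ = ∫⁻ s, ∫⁻ t, ind (s, t) ∂(volume : Measure ℝ) ∂γ := by
          refine (lintegral_lintegral_swap ?_).symm
          exact (measurable_const.indicator hSmeas).aemeasurable
      _ = ∫⁻ s, ENNReal.ofReal (kern s y) ∂γ := lintegral_congr fun s => (step1 s).symm

section MeasureSide
variable {μ ν : Measure ℝ} [IsFiniteMeasure μ] [IsFiniteMeasure ν]

lemma integrable_id' (hμ : Integrable (fun y => |y|) μ) : Integrable (fun y : ℝ => y) μ :=
  hμ.mono' measurable_id.aestronglyMeasurable
    (ae_of_all _ fun y => by simp [Real.norm_eq_abs, abs_abs])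

lemma integrable_abs_sub (hμ : Integrable (fun y => |y|) μ) (s : ℝ) :
    Integrable (fun y : ℝ => |y - s|) μ :=
  (hμ.add (integrable_const |s|)).mono'
    ((continuous_id.sub continuous_const).abs.aestronglyMeasurable)
    (ae_of_all _ fun y => by
      rw [Real.norm_eq_abs, abs_abs]
      exact (abs_sub _ _).trans (by rfl))

lemma integrable_pos_part (hμ : Integrable (fun y => |y|) μ) (s : ℝ) :
    Integrable (fun y : ℝ => max (y - s) 0) μ :=
  (integrable_abs_sub hμ s).mono'
    (((continuous_id.sub continuous_const).max continuous_const).aestronglyMeasurable)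
    (ae_of_all _ fun y => by
      rw [Real.norm_eq_abs, abs_le]
      constructor
      · exact le_trans (neg_nonpos.2 (abs_nonneg _)) (le_max_right _ _)
      · exact max_le (le_abs_self _) (abs_nonneg _))

lemma integrable_neg_part (hμ : Integrable (fun y => |y|) μ) (s : ℝ) :
    Integrable (fun y : ℝ => max (s - y) 0) μ :=
  (integrable_abs_sub hμ s).mono'
    (((continuous_const.sub continuous_id).max continuous_const).aestronglyMeasurable)
    (ae_of_all _ fun y => by
      rw [Real.norm_eq_abs, abs_le]
      constructor
      · exact le_trans (neg_nonpos.2 (abs_nonneg _)) (le_max_right _ _)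
      · exact max_le (by rw [abs_sub_comm]; exact le_abs_self _) (abs_nonneg _))

lemma integral_pos_part (hμ : Integrable (fun y => |y|) μ) (s : ℝ) :
    ∫ y, max (y - s) 0 ∂μ =
      ((∫ y, y ∂μ) - s * (μ univ).toReal + potential μ s) / 2 := by
  have heq : (fun y : ℝ => max (y - s) 0) = fun y => ((y - s) + |y - s|) / 2 := by
    funext y
    rcases le_total (y - s) 0 with h | h
    · rw [max_eq_right h, abs_of_nonpos h]; ring
    · rw [max_eq_left h, abs_of_nonneg h]; ring
  rw [heq]
  have h1 : Integrable (fun y : ℝ => y - s) μ := (integrable_id' hμ).sub (integrable_const s)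
  have h2 := integrable_abs_sub hμ s
  simp only [div_eq_mul_inv]
  rw [integral_mul_const, integral_add h1 h2, integral_sub (integrable_id' hμ)
    (integrable_const s), integral_const]
  unfold potential
  simp only [smul_eq_mul, measureReal_def]
  ring

lemma integral_neg_part (hμ : Integrable (fun y => |y|) μ) (s : ℝ) :
    ∫ y, max (s - y) 0 ∂μ =
      (s * (μ univ).toReal - (∫ y, y ∂μ) + potential μ s) / 2 := by
  have heq : (fun y : ℝ => max (s - y) 0) = fun y => ((s - y) + |y - s|) / 2 := by
    funext y
    rcases le_total (y - s) 0 with h | h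
    · rw [max_eq_left (by linarith), abs_of_nonpos h]; ring
    · rw [max_eq_right (by linarith), abs_of_nonneg h]; ring
  rw [heq]
  have h1 : Integrable (fun y : ℝ => s - y) μ := (integrable_const s).sub (integrable_id' hμ)
  have h2 := integrable_abs_sub hμ s
  simp only [div_eq_mul_inv]
  rw [integral_mul_const, integral_add h1 h2, integral_sub (integrable_const s)
    (integrable_id' hμ), integral_const]
  unfold potential
  simp only [smul_eq_mul, measureReal_def]
  ring

lemma tendsto_pos_part_atTop (hμ : Integrable (fun y => |y|) μ) :
    Tendsto (fun x : ℝ => ∫ y, max (y - x) 0 ∂μ) atTop (𝓝 0) := by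
  have key : Tendsto (fun x : ℝ => ∫ y, max (y - x) 0 ∂μ) atTop (𝓝 (∫ _, (0:ℝ) ∂μ)) := by
    refine tendsto_integral_filter_of_dominated_convergence (fun y => |y|) ?_ ?_ hμ ?_
    · exact Eventually.of_forall fun x =>
        (((continuous_id.sub continuous_const).max continuous_const).aestronglyMeasurable)
    · filter_upwards [eventually_ge_atTop (0 : ℝ)] with x hx
      refine ae_of_all _ fun y => ?_
      rw [Real.norm_eq_abs, abs_of_nonneg (le_max_right _ _)]
      exact max_le (by linarith [le_abs_self y]) (abs_nonneg _)
    · refine ae_of_all _ fun y => ?_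
      refine Tendsto.congr' ?_ tendsto_const_nhds
      filter_upwards [eventually_ge_atTop y] with x hx
      rw [max_eq_right (by linarith)]
  simpa using key

lemma tendsto_neg_part_atBot (hμ : Integrable (fun y => |y|) μ) :
    Tendsto (fun x : ℝ => ∫ y, max (x - y) 0 ∂μ) atBot (𝓝 0) := by
  have key : Tendsto (fun x : ℝ => ∫ y, max (x - y) 0 ∂μ) atBot (𝓝 (∫ _, (0:ℝ) ∂μ)) := by
    refine tendsto_integral_filter_of_dominated_convergence (fun y => |y|) ?_ ?_ hμ ?_
    · exact Eventually.of_forall fun x =>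
        (((continuous_const.sub continuous_id).max continuous_const).aestronglyMeasurable)
    · filter_upwards [eventually_le_atBot (0 : ℝ)] with x hx
      refine ae_of_all _ fun y => ?_
      rw [Real.norm_eq_abs, abs_of_nonneg (le_max_right _ _)]
      refine max_le ?_ (abs_nonneg _)
      have := neg_abs_le y
      linarith
    · refine ae_of_all _ fun y => ?_
      refine Tendsto.congr' ?_ tendsto_const_nhds
      filter_upwards [eventually_le_atBot y] with x hx
      rw [max_eq_right (by linarith)]
  simpa using key

lemma mean_eq (hμ : Integrable (fun y => |y|) μ) (hν : Integrable (fun y => |y|) ν)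
    (hmass : μ univ = ν univ) (hpot : ∀ x, potential μ x ≤ potential ν x) :
    ∫ y, y ∂μ = ∫ y, y ∂ν := by
  have hM : (μ univ).toReal = (ν univ).toReal := by rw [hmass]
  have h1 : (∫ y, y ∂ν) - (∫ y, y ∂μ) ≤ 0 := by
    have hle : ∀ x : ℝ, (∫ y, y ∂ν) - (∫ y, y ∂μ) ≤
        2 * (∫ y, max (y - x) 0 ∂ν) - 2 * (∫ y, max (y - x) 0 ∂μ) := by
      intro x
      have hU := hpot x
      have e1 := integral_pos_part hμ x
      have e2 := integral_pos_part hν x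
      rw [hM] at e1
      linarith
    have htend : Tendsto (fun x : ℝ => 2 * (∫ y, max (y - x) 0 ∂ν)
        - 2 * (∫ y, max (y - x) 0 ∂μ)) atTop (𝓝 0) := by
      have := ((tendsto_pos_part_atTop hν).const_mul 2).sub
        ((tendsto_pos_part_atTop hμ).const_mul 2)
      simpa using this
    exact ge_of_tendsto htend (Eventually.of_forall hle)
  have h2 : (∫ y, y ∂μ) - (∫ y, y ∂ν) ≤ 0 := by
    have hle : ∀ x : ℝ, (∫ y, y ∂μ) - (∫ y, y ∂ν) ≤
        2 * (∫ y, max (x - y) 0 ∂ν) - 2 * (∫ y, max (x - y) 0 ∂μ) := by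
      intro x
      have hU := hpot x
      have e1 := integral_neg_part hμ x
      have e2 := integral_neg_part hν x
      rw [hM] at e1
      linarith
    have htend : Tendsto (fun x : ℝ => 2 * (∫ y, max (x - y) 0 ∂ν)
        - 2 * (∫ y, max (x - y) 0 ∂μ)) atBot (𝓝 0) := by
      have := ((tendsto_neg_part_atBot hν).const_mul 2).sub
        ((tendsto_neg_part_atBot hμ).const_mul 2)
      simpa using this
    exact ge_of_tendsto htend (Eventually.of_forall hle)
  linarith

lemma kern_lintegral_le (hμ : Integrable (fun y => |y|) μ) (hν : Integrable (fun y => |y|) ν)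
    (hmass : μ univ = ν univ) (hmean : ∫ y, y ∂μ = ∫ y, y ∂ν)
    (hpot : ∀ x, potential μ x ≤ potential ν x) (s : ℝ) :
    ∫⁻ y, ENNReal.ofReal (kern s y) ∂μ ≤ ∫⁻ y, ENNReal.ofReal (kern s y) ∂ν := by
  have hM : (μ univ).toReal = (ν univ).toReal := by rw [hmass]
  by_cases hs : 0 < s
  · have hk : ∀ (η : Measure ℝ), (fun y => ENNReal.ofReal (kern s y)) =
        fun y => ENNReal.ofReal (max (y - s) 0) := by
      intro η; funext y; rw [kern, if_pos hs]
    simp only [hk μ]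
    rw [← ofReal_integral_eq_lintegral_ofReal (integrable_pos_part hμ s)
        (ae_of_all _ fun y => le_max_right _ _),
      ← ofReal_integral_eq_lintegral_ofReal (integrable_pos_part hν s)
        (ae_of_all _ fun y => le_max_right _ _)]
    refine ENNReal.ofReal_le_ofReal ?_
    rw [integral_pos_part hμ s, integral_pos_part hν s, hM, hmean]
    have := hpot s
    linarith
  · have hk : ∀ (η : Measure ℝ), (fun y => ENNReal.ofReal (kern s y)) =
        fun y => ENNReal.ofReal (max (s - y) 0) := by
      intro η; funext y; rw [kern, if_neg hs]
    simp only [hk μ]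
    rw [← ofReal_integral_eq_lintegral_ofReal (integrable_neg_part hμ s)
        (ae_of_all _ fun y => le_max_right _ _),
      ← ofReal_integral_eq_lintegral_ofReal (integrable_neg_part hν s)
        (ae_of_all _ fun y => le_max_right _ _)]
    refine ENNReal.ofReal_le_ofReal ?_
    rw [integral_neg_part hμ s, integral_neg_part hν s, hM, hmean]
    have := hpot s
    linarith

end MeasureSide

end Aux

theorem convexOrder_iff_potential_le
    (μ ν : Measure ℝ) [IsFiniteMeasure μ] [IsFiniteMeasure ν]
    (hμ : Integrable (fun y => |y|) μ) (hν : Integrable (fun y => |y|) ν)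
    (hmass : μ Set.univ = ν Set.univ) :
    ConvexOrder μ ν ↔ ∀ x : ℝ, potential μ x ≤ potential ν x := by
  constructor
  · intro h x
    have hconv : ConvexOn ℝ univ (fun y : ℝ => |y - x|) := by
      simpa [Real.dist_eq] using convexOn_dist x (convex_univ (𝕜 := ℝ) (E := ℝ))
    exact h _ hconv (integrable_abs_sub hμ x) (integrable_abs_sub hν x)
  · intro hpot φ hφ hφμ hφν
    have hmean := mean_eq hμ hν hmass hpot
    have hM : (μ univ).toReal = (ν univ).toReal := by rw [hmass]
    set F0 := SF hφ 0 with hF0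
    set c := φ 0 with hc
    have hψμ : Integrable (fun y => φ y - c - F0 * y) μ :=
      (hφμ.sub (integrable_const c)).sub ((integrable_id' hμ).const_mul F0)
    have hψν : Integrable (fun y => φ y - c - F0 * y) ν :=
      (hφν.sub (integrable_const c)).sub ((integrable_id' hν).const_mul F0)
    have hkey : ∫ y, (φ y - c - F0 * y) ∂μ ≤ ∫ y, (φ y - c - F0 * y) ∂ν := by
      rw [← ENNReal.ofReal_le_ofReal_iff (integral_nonneg (psi_nonneg hφ)),
        ofReal_integral_eq_lintegral_ofReal hψμ (ae_of_all _ (psi_nonneg hφ)),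
        ofReal_integral_eq_lintegral_ofReal hψν (ae_of_all _ (psi_nonneg hφ))]
      have hmeasμ : AEMeasurable (Function.uncurry fun (y s : ℝ) =>
          ENNReal.ofReal (kern s y)) (μ.prod (SF hφ).measure) :=
        (measurable_kern_pair.comp measurable_swap).aemeasurable
      have hmeasν : AEMeasurable (Function.uncurry fun (y s : ℝ) =>
          ENNReal.ofReal (kern s y)) (ν.prod (SF hφ).measure) :=
        (measurable_kern_pair.comp measurable_swap).aemeasurable
      calc ∫⁻ y, ENNReal.ofReal (φ y - c - F0 * y) ∂μ
          = ∫⁻ y, ∫⁻ s, ENNReal.ofReal (kern s y) ∂(SF hφ).measure ∂μ :=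
            lintegral_congr fun y => rep hφ y
        _ = ∫⁻ s, ∫⁻ y, ENNReal.ofReal (kern s y) ∂μ ∂(SF hφ).measure :=
            lintegral_lintegral_swap hmeasμ
        _ ≤ ∫⁻ s, ∫⁻ y, ENNReal.ofReal (kern s y) ∂ν ∂(SF hφ).measure :=
            lintegral_mono fun s => kern_lintegral_le hμ hν hmass hmean hpot s
        _ = ∫⁻ y, ∫⁻ s, ENNReal.ofReal (kern s y) ∂(SF hφ).measure ∂ν :=
            (lintegral_lintegral_swap hmeasν).symm
        _ = ∫⁻ y, ENNReal.ofReal (φ y - c - F0 * y) ∂ν :=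
            lintegral_congr fun y => (rep hφ y).symm
    have hdecomp : ∀ (η : Measure ℝ) [IsFiniteMeasure η], Integrable φ η →
        Integrable (fun y : ℝ => |y|) η →
        ∫ y, (φ y - c - F0 * y) ∂η = (∫ y, φ y ∂η) - c * (η univ).toReal
          - F0 * ∫ y, y ∂η := by
      intro η _ hint habs
      have h1 : Integrable (fun y : ℝ => φ y - c) η := hint.sub (integrable_const c)
      have h2 : Integrable (fun y : ℝ => F0 * y) η := (integrable_id' habs).const_mul F0
      have h3 : Integrable (fun y : ℝ => (c : ℝ)) η := integrable_const c
      rw [integral_sub h1 h2, integral_sub hint h3, integral_const, MeasureTheory.integral_const_mul]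
      simp only [smul_eq_mul, measureReal_def]
      ring
    rw [hdecomp μ hφμ hμ, hdecomp ν hφν hν, hM, hmean] at hkey
    linarith
end

section
/- Let η be a finite measure on ℝ with finite first moment. If the potential function U_η is affine on an interval [x - ε, x + ε] for some ε > 0, then x does not belong to the support of η. -/
open MeasureTheory Set Filter Topology

theorem affine_potential_not_mem_support
    (η : Measure ℝ) [IsFiniteMeasure η] (hη : Integrable (fun y => |y|) η)
    (x ε : ℝ) (hε : 0 < ε)
    (haff : ∃ α β : ℝ, ∀ y ∈ Set.Icc (x - ε) (x + ε), potential η y = α * y + β) :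
    ∃ U : Set ℝ, IsOpen U ∧ x ∈ U ∧ η U = 0 := by
  obtain ⟨α, β, haff⟩ := haff
  have hid : Integrable (fun y : ℝ => y) η := by
    exact (integrable_norm_iff measurable_id.aestronglyMeasurable).1
      (by simpa [Real.norm_eq_abs] using hη)
  have habs : ∀ c : ℝ, Integrable (fun y => |y - c|) η := fun c =>
    (hid.sub (integrable_const c)).abs
  set f : ℝ → ℝ := fun y => |y - (x + ε)| + |y - (x - ε)| - 2 * |y - x| with hf
  have hf_int : Integrable f η :=
    ((habs (x + ε)).add (habs (x - ε))).sub ((habs x).const_mul 2)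
  have hf_nonneg : ∀ y, 0 ≤ f y := by
    intro y
    have h := abs_add_le (y - (x + ε)) (y - (x - ε))
    have h2 : (y - (x + ε)) + (y - (x - ε)) = 2 * (y - x) := by ring
    rw [h2, abs_mul] at h
    simp only [hf]
    have : |(2 : ℝ)| = 2 := by norm_num
    rw [this] at h
    linarith
  have hint : ∫ y, f y ∂η = 0 := by
    have h1 : ∫ y, f y ∂η =
        potential η (x + ε) + potential η (x - ε) - 2 * potential η x := by
      have hsum : Integrable (fun y => |y - (x + ε)| + |y - (x - ε)|) η :=
        (habs (x + ε)).add (habs (x - ε))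
      have h2 : Integrable (fun y => 2 * |y - x|) η := (habs x).const_mul 2
      rw [show f = fun y => (|y - (x + ε)| + |y - (x - ε)|) - 2 * |y - x| from rfl,
        integral_sub hsum h2, integral_add (habs (x + ε)) (habs (x - ε)), integral_const_mul]
      rfl
    have m1 : x + ε ∈ Set.Icc (x - ε) (x + ε) := by constructor <;> linarith
    have m2 : x - ε ∈ Set.Icc (x - ε) (x + ε) := by constructor <;> linarith
    have m3 : x ∈ Set.Icc (x - ε) (x + ε) := by constructor <;> linarith
    rw [h1, haff _ m1, haff _ m2, haff _ m3]; ring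
  have hae : ∀ᵐ y ∂η, f y = 0 := by
    have := (integral_eq_zero_iff_of_nonneg (fun y => hf_nonneg y) hf_int).1 hint
    filter_upwards [this] with y hy using by simpa using hy
  have hnull : η {y | ¬ f y = 0} = 0 := by rwa [← ae_iff]
  refine ⟨Metric.ball x (ε / 2), Metric.isOpen_ball, Metric.mem_ball_self (by linarith), ?_⟩
  refine measure_mono_null (fun y hy => ?_) hnull
  have hdist : |y - x| < ε / 2 := by
    simpa [Real.dist_eq] using hy
  have h1 : |y - (x + ε)| = (x + ε) - y := by
    rw [abs_of_nonpos (by cases abs_lt.1 hdist; linarith)]; ring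
  have h2 : |y - (x - ε)| = y - (x - ε) := by
    rw [abs_of_nonneg (by cases abs_lt.1 hdist; linarith)]
  have : f y = 2 * ε - 2 * |y - x| := by simp only [hf]; rw [h1, h2]; ring
  intro hzero
  rw [this] at hzero
  linarith
end

section
/- The potential function U_η of a finite measure η satisfies (1/2)U_η'' = η in the distributional sense: for every smooth compactly supported φ : ℝ → ℝ, (1/2)∫ U_η(x) φ''(x) dx = ∫ φ dη. -/
open MeasureTheory Set Filter Topology

lemma key_abs_integral (φ : ℝ → ℝ) (hφ : ContDiff ℝ (⊤ : ℕ∞) φ) (hφc : HasCompactSupport φ) (y : ℝ) :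
    (∫ x, |y - x| * deriv (deriv φ) x) = 2 * φ y := by
  have hφ0 : ContDiff ℝ (↑(⊤:ℕ∞)) φ := hφ.of_le (by simp)
  have hd1 : ContDiff ℝ (↑(⊤:ℕ∞)) (deriv φ) := (contDiff_infty_iff_deriv.mp hφ0).2
  have hdiff : Differentiable ℝ φ := (contDiff_infty_iff_deriv.mp hφ0).1
  have hdiff' : Differentiable ℝ (deriv φ) := (contDiff_infty_iff_deriv.mp hd1).1
  have cont' : Continuous (deriv φ) := hd1.continuous
  have cont'' : Continuous (deriv (deriv φ)) := (contDiff_infty_iff_deriv.mp hd1).2.continuous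
  have hc' : HasCompactSupport (deriv φ) := hφc.deriv
  have hc'' : HasCompactSupport (deriv (deriv φ)) := hc'.deriv
  obtain ⟨R, hR⟩ := hφc.isCompact.isBounded.subset_closedBall 0
  rw [Real.closedBall_eq_Icc] at hR
  set b : ℝ := max R |y| + 1 with hb
  set a : ℝ := -(max R |y| + 1) with ha
  have hRb : R < b := lt_of_le_of_lt (le_max_left _ _) (lt_add_one _)
  have haR : a < -R := by simp only [ha]; linarith
  have hay : a ≤ y := by
    have : |y| ≤ max R |y| := le_max_right _ _
    have := neg_abs_le y; simp only [ha]; linarith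
  have hyb : y ≤ b := by
    have h1 : |y| ≤ max R |y| := le_max_right _ _
    have := le_abs_self y; simp only [hb]; linarith
  have hab : a ≤ b := hay.trans hyb
  have hsupp : tsupport φ ⊆ Ioc a b := by
    intro x hx
    have := hR hx
    simp only [zero_sub, zero_add] at this
    exact ⟨lt_of_lt_of_le haR this.1, this.2.trans hRb.le⟩
  have hsupp'' : tsupport (deriv (deriv φ)) ⊆ tsupport φ := by
    refine (closure_minimal ?_ isClosed_closure)
    exact (support_deriv_subset).trans ((closure_minimal support_deriv_subset isClosed_closure))
  have hzero : ∀ x ∉ Ioc a b, |y - x| * deriv (deriv φ) x = 0 := by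
    intro x hx
    have : x ∉ tsupport (deriv (deriv φ)) := fun h => hx (hsupp (hsupp'' h))
    rw [image_eq_zero_of_notMem_tsupport this, mul_zero]
  have hna : a ∉ tsupport φ := fun h => lt_irrefl a (hsupp h).1
  have hnb : b ∉ tsupport φ := by
    intro h
    have h2 := (hR h).2
    rw [zero_add] at h2
    simp only [hb] at *
    linarith
  have hφa : φ a = 0 := image_eq_zero_of_notMem_tsupport hna
  have hφb : φ b = 0 := image_eq_zero_of_notMem_tsupport hnb
  have hsupp' : Function.support (deriv φ) ⊆ tsupport φ := support_deriv_subset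
  have hφ'a : deriv φ a = 0 := by
    by_contra h; exact hna (hsupp' h)
  have hφ'b : deriv φ b = 0 := by
    by_contra h; exact hnb (hsupp' h)
  -- reduce to interval integral
  have hstep : (∫ x, |y - x| * deriv (deriv φ) x) = ∫ x in a..b, |y - x| * deriv (deriv φ) x := by
    rw [intervalIntegral.integral_of_le hab,
      setIntegral_eq_integral_of_forall_compl_eq_zero (fun x hx => hzero x hx)]
  rw [hstep]
  have hii : ∀ u v : ℝ, IntervalIntegrable (deriv (deriv φ)) volume u v :=
    fun u v => cont''.intervalIntegrable u v
  have hii' : ∀ u v : ℝ, IntervalIntegrable (deriv φ) volume u v :=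
    fun u v => cont'.intervalIntegrable u v
  have hsplit : (∫ x in a..y, |y - x| * deriv (deriv φ) x)
      + (∫ x in y..b, |y - x| * deriv (deriv φ) x)
      = ∫ x in a..b, |y - x| * deriv (deriv φ) x := by
    apply intervalIntegral.integral_add_adjacent_intervals
    · exact ((continuous_const.sub continuous_id).abs.mul cont'').intervalIntegrable _ _
    · exact ((continuous_const.sub continuous_id).abs.mul cont'').intervalIntegrable _ _
  rw [← hsplit]
  have h1 : (∫ x in a..y, |y - x| * deriv (deriv φ) x) = φ y := by
    have hcg : (∫ x in a..y, |y - x| * deriv (deriv φ) x)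
        = ∫ x in a..y, (y - x) * deriv (deriv φ) x := by
      apply intervalIntegral.integral_congr
      intro x hx
      rw [uIcc_of_le hay] at hx
      dsimp only
      rw [abs_of_nonneg (by linarith [hx.2] : (0:ℝ) ≤ y - x)]
    rw [hcg]
    rw [intervalIntegral.integral_mul_deriv_eq_deriv_mul
      (u := fun x => y - x) (u' := fun _ => (-1 : ℝ)) (v := deriv φ) (v' := deriv (deriv φ))
      (fun x _ => (hasDerivAt_const x y).sub (hasDerivAt_id x) |>.congr_deriv (by ring))
      (fun x _ => (hdiff' x).hasDerivAt)
      (intervalIntegrable_const) (hii a y)]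
    have : (∫ x in a..y, (-1 : ℝ) * deriv φ x) = -(φ y - φ a) := by
      rw [intervalIntegral.integral_const_mul, intervalIntegral.integral_deriv_eq_sub
        (fun x _ => hdiff x) (hii' a y)]
      ring
    rw [this, hφ'a, hφa]; ring
  have h2 : (∫ x in y..b, |y - x| * deriv (deriv φ) x) = φ y := by
    have hcg : (∫ x in y..b, |y - x| * deriv (deriv φ) x)
        = ∫ x in y..b, (x - y) * deriv (deriv φ) x := by
      apply intervalIntegral.integral_congr
      intro x hx
      rw [uIcc_of_le hyb] at hx
      dsimp only
      rw [abs_of_nonpos (by linarith [hx.1] : y - x ≤ 0)]; ring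
    rw [hcg]
    rw [intervalIntegral.integral_mul_deriv_eq_deriv_mul
      (u := fun x => x - y) (u' := fun _ => (1 : ℝ)) (v := deriv φ) (v' := deriv (deriv φ))
      (fun x _ => (hasDerivAt_id x).sub (hasDerivAt_const x y) |>.congr_deriv (by ring))
      (fun x _ => (hdiff' x).hasDerivAt)
      (intervalIntegrable_const) (hii y b)]
    have : (∫ x in y..b, (1 : ℝ) * deriv φ x) = φ b - φ y := by
      rw [intervalIntegral.integral_const_mul, intervalIntegral.integral_deriv_eq_sub
        (fun x _ => hdiff x) (hii' y b)]
      ring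
    rw [this, hφ'b, hφb]; ring
  rw [h1, h2]; ring


theorem potential_distributional_second_derivative
    (η : Measure ℝ) [IsFiniteMeasure η] (hη : Integrable (fun y => |y|) η)
    (φ : ℝ → ℝ) (hφ : ContDiff ℝ (⊤ : ℕ∞) φ) (hφc : HasCompactSupport φ) :
    (1 / 2 : ℝ) * ∫ x, potential η x * deriv (deriv φ) x = ∫ x, φ x ∂η := by
  have hφ0 : ContDiff ℝ (↑(⊤:ℕ∞)) φ := hφ.of_le (by simp)
  have hd1 : ContDiff ℝ (↑(⊤:ℕ∞)) (deriv φ) := (contDiff_infty_iff_deriv.mp hφ0).2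
  have cont'' : Continuous (deriv (deriv φ)) := (contDiff_infty_iff_deriv.mp hd1).2.continuous
  have hc'' : HasCompactSupport (deriv (deriv φ)) := hφc.deriv.deriv
  have hDint : Integrable (deriv (deriv φ)) volume := cont''.integrable_of_hasCompactSupport hc''
  have hint : Integrable (Function.uncurry fun (x : ℝ) (y : ℝ) => |y - x| * deriv (deriv φ) x)
      (volume.prod η) := by
    have hcontu : Continuous (Function.uncurry fun (x : ℝ) (y : ℝ) => |y - x| * deriv (deriv φ) x) := by
      apply Continuous.mul
      · exact (continuous_snd.sub continuous_fst).abs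
      · exact cont''.comp continuous_fst
    have hA : Integrable (fun x : ℝ => |x| * |deriv (deriv φ) x|) volume := by
      apply Continuous.integrable_of_hasCompactSupport
      · exact (continuous_abs.mul cont''.abs)
      · apply HasCompactSupport.mul_left
        exact hc''.comp_left (g := abs) abs_zero
    have hB : Integrable (fun _ : ℝ => (1 : ℝ)) η := integrable_const 1
    have hg1 : Integrable (fun p : ℝ × ℝ => (|p.1| * |deriv (deriv φ) p.1|) * (1 : ℝ))
        (volume.prod η) := hA.mul_prod hB
    have hg2 : Integrable (fun p : ℝ × ℝ => |deriv (deriv φ) p.1| * |p.2|) (volume.prod η) :=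
      hDint.abs.mul_prod hη
    refine (hg1.add hg2).mono' hcontu.aestronglyMeasurable (ae_of_all _ fun p => ?_)
    simp only [Function.uncurry, norm_mul, Real.norm_eq_abs, abs_abs, mul_one, Pi.add_apply]
    have h1 : |p.2 - p.1| ≤ |p.1| + |p.2| := by
      calc |p.2 - p.1| ≤ |p.2| + |p.1| := abs_sub p.2 p.1
        _ = |p.1| + |p.2| := by ring
    have h2 : (0:ℝ) ≤ |deriv (deriv φ) p.1| := abs_nonneg _
    nlinarith [abs_nonneg (p.2 - p.1), abs_nonneg p.1, abs_nonneg p.2]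
  have hswap := integral_integral_swap hint
  have hpot : (∫ x, potential η x * deriv (deriv φ) x)
      = ∫ x, ∫ y, |y - x| * deriv (deriv φ) x ∂η :=
    integral_congr_ae (Eventually.of_forall fun x => by
      simp only [potential]; rw [← integral_mul_const])
  rw [hpot, hswap]
  have hkey : (∫ y, (∫ x, |y - x| * deriv (deriv φ) x) ∂η) = ∫ y, 2 * φ y ∂η :=
    integral_congr_ae (Eventually.of_forall fun y => key_abs_integral φ hφ hφc y)
  rw [hkey, integral_const_mul]
  ring
end

section
/- Let F ⊂ ℝ be a nonempty closed set and define the Kellerer dilation K^F(x, ·) to be δ_x if x ∈ F, and otherwise the unique probability measure on {x^-, x^+} with barycenter x, where x^- = sup(F ∩ (-∞, x]) and x^+ = inf(F ∩ [x, ∞)) (assumed both finite). Then for every probability measure η with finite first moment such that x^-, x^+ are finite for η-a.e. x, the measure ηK^F is concentrated on F, dominates η in convex order, and has the same mass and barycenter as η. -/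
open MeasureTheory Set Filter Topology
open Classical in
/-- The Kellerer dilation kernel associated to a closed set `F`. -/
noncomputable def kellererKernel (F : Set ℝ) (x : ℝ) : MeasureTheory.Measure ℝ :=
  if x ∈ F then MeasureTheory.Measure.dirac x
  else
    ENNReal.ofReal ((sInf (F ∩ Set.Ici x) - x) / (sInf (F ∩ Set.Ici x) - sSup (F ∩ Set.Iic x)))
        • MeasureTheory.Measure.dirac (sSup (F ∩ Set.Iic x))
      + ENNReal.ofReal ((x - sSup (F ∩ Set.Iic x)) / (sInf (F ∩ Set.Ici x) - sSup (F ∩ Set.Iic x)))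
        • MeasureTheory.Measure.dirac (sInf (F ∩ Set.Ici x))

/-- `η K^F`, the image of `η` under the Kellerer dilation. -/
noncomputable def dilate (η : MeasureTheory.Measure ℝ) (F : Set ℝ) : MeasureTheory.Measure ℝ :=
  η.bind (kellererKernel F)

open Classical in
noncomputable def aF (F : Set ℝ) (x : ℝ) : ℝ :=
  if (F ∩ Set.Iic x).Nonempty then sSup (F ∩ Set.Iic x) else x

open Classical in
noncomputable def bF (F : Set ℝ) (x : ℝ) : ℝ :=
  if (F ∩ Set.Ici x).Nonempty then sInf (F ∩ Set.Ici x) else x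

lemma aF_mono (F : Set ℝ) : Monotone (aF F) := by
  intro x y hxy
  unfold aF
  by_cases hx : (F ∩ Set.Iic x).Nonempty
  · have hy : (F ∩ Set.Iic y).Nonempty :=
      hx.mono (Set.inter_subset_inter_right _ (Set.Iic_subset_Iic.2 hxy))
    rw [if_pos hx, if_pos hy]
    exact csSup_le_csSup ⟨y, fun z hz => hz.2⟩ hx
      (Set.inter_subset_inter_right _ (Set.Iic_subset_Iic.2 hxy))
  · rw [if_neg hx]
    by_cases hy : (F ∩ Set.Iic y).Nonempty
    · rw [if_pos hy]
      obtain ⟨z, hzF, hzy⟩ := hy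
      have hxz : x < z := by
        by_contra h
        exact hx ⟨z, hzF, not_lt.1 h⟩
      exact le_trans hxz.le (le_csSup ⟨y, fun w hw => hw.2⟩ ⟨hzF, hzy⟩)
    · rw [if_neg hy]; exact hxy

lemma bF_mono (F : Set ℝ) : Monotone (bF F) := by
  intro x y hxy
  unfold bF
  by_cases hy : (F ∩ Set.Ici y).Nonempty
  · have hx : (F ∩ Set.Ici x).Nonempty :=
      hy.mono (Set.inter_subset_inter_right _ (Set.Ici_subset_Ici.2 hxy))
    rw [if_pos hx, if_pos hy]
    exact csInf_le_csInf ⟨x, fun z hz => hz.2⟩ hy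
      (Set.inter_subset_inter_right _ (Set.Ici_subset_Ici.2 hxy))
  · rw [if_neg hy]
    by_cases hx : (F ∩ Set.Ici x).Nonempty
    · rw [if_pos hx]
      obtain ⟨z, hzF, hzx⟩ := hx
      have hzy : z < y := by
        by_contra h
        exact hy ⟨z, hzF, not_lt.1 h⟩
      exact le_trans (csInf_le ⟨x, fun w hw => hw.2⟩ ⟨hzF, hzx⟩) hzy.le
    · rw [if_neg hx]; exact hxy

lemma aF_mem (F : Set ℝ) (x : ℝ) (hx : x ∈ F) : aF F x = x := by
  have hne : (F ∩ Set.Iic x).Nonempty := ⟨x, hx, le_refl x⟩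
  rw [aF, if_pos hne]
  exact le_antisymm (csSup_le hne fun z hz => hz.2)
    (le_csSup ⟨x, fun w hw => hw.2⟩ ⟨hx, le_refl x⟩)

lemma bF_mem (F : Set ℝ) (x : ℝ) (hx : x ∈ F) : bF F x = x := by
  have hne : (F ∩ Set.Ici x).Nonempty := ⟨x, hx, le_refl x⟩
  rw [bF, if_pos hne]
  exact le_antisymm (csInf_le ⟨x, fun w hw => hw.2⟩ ⟨hx, le_refl x⟩)
    (le_csInf hne fun z hz => hz.2)

lemma aF_lt (F : Set ℝ) (hFc : IsClosed F) (x : ℝ) (hx : x ∉ F)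
    (h : (F ∩ Set.Iic x).Nonempty) : aF F x ∈ F ∧ aF F x < x := by
  rw [aF, if_pos h]
  have hmem : sSup (F ∩ Set.Iic x) ∈ F ∩ Set.Iic x :=
    (hFc.inter isClosed_Iic).csSup_mem h ⟨x, fun w hw => hw.2⟩
  exact ⟨hmem.1, lt_of_le_of_ne hmem.2 (fun he => hx (he ▸ hmem.1))⟩

lemma bF_gt (F : Set ℝ) (hFc : IsClosed F) (x : ℝ) (hx : x ∉ F)
    (h : (F ∩ Set.Ici x).Nonempty) : bF F x ∈ F ∧ x < bF F x := by
  rw [bF, if_pos h]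
  have hmem : sInf (F ∩ Set.Ici x) ∈ F ∩ Set.Ici x :=
    (hFc.inter isClosed_Ici).csInf_mem h ⟨x, fun w hw => hw.2⟩
  exact ⟨hmem.1, lt_of_le_of_ne hmem.2 (fun he => hx (he ▸ hmem.1))⟩

open Classical in
noncomputable def c1 (F : Set ℝ) (x : ℝ) : ℝ :=
  if x ∈ F then 1 else (bF F x - x) / (bF F x - aF F x)

open Classical in
noncomputable def c2 (F : Set ℝ) (x : ℝ) : ℝ :=
  if x ∈ F then 0 else (x - aF F x) / (bF F x - aF F x)

noncomputable def kk (F : Set ℝ) (x : ℝ) : Measure ℝ :=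
  ENNReal.ofReal (c1 F x) • Measure.dirac (aF F x)
    + ENNReal.ofReal (c2 F x) • Measure.dirac (bF F x)

lemma c1_nonneg (F : Set ℝ) (hFc : IsClosed F) (x : ℝ)
    (h : (F ∩ Set.Iic x).Nonempty ∧ (F ∩ Set.Ici x).Nonempty) : 0 ≤ c1 F x := by
  rw [c1]
  split
  · norm_num
  · next hx =>
    have ha := aF_lt F hFc x hx h.1
    have hb := bF_gt F hFc x hx h.2
    exact div_nonneg (by linarith [hb.2]) (by linarith [ha.2, hb.2])

lemma c2_nonneg (F : Set ℝ) (hFc : IsClosed F) (x : ℝ)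
    (h : (F ∩ Set.Iic x).Nonempty ∧ (F ∩ Set.Ici x).Nonempty) : 0 ≤ c2 F x := by
  rw [c2]
  split
  · norm_num
  · next hx =>
    have ha := aF_lt F hFc x hx h.1
    have hb := bF_gt F hFc x hx h.2
    exact div_nonneg (by linarith [ha.2]) (by linarith [ha.2, hb.2])

lemma c_add (F : Set ℝ) (hFc : IsClosed F) (x : ℝ)
    (h : (F ∩ Set.Iic x).Nonempty ∧ (F ∩ Set.Ici x).Nonempty) : c1 F x + c2 F x = 1 := by
  rw [c1, c2]
  split
  · norm_num
  · next hx =>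
    have ha := aF_lt F hFc x hx h.1
    have hb := bF_gt F hFc x hx h.2
    have hne : bF F x - aF F x ≠ 0 := by linarith [ha.2, hb.2]
    field_simp
    ring

lemma c_bary (F : Set ℝ) (hFc : IsClosed F) (x : ℝ)
    (h : (F ∩ Set.Iic x).Nonempty ∧ (F ∩ Set.Ici x).Nonempty) :
    c1 F x * aF F x + c2 F x * bF F x = x := by
  rw [c1, c2]
  split
  · next hx => rw [aF_mem F x hx]; ring
  · next hx =>
    have ha := aF_lt F hFc x hx h.1
    have hb := bF_gt F hFc x hx h.2
    have hne : bF F x - aF F x ≠ 0 := by linarith [ha.2, hb.2]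
    field_simp
    ring

lemma kk_eq (F : Set ℝ) (x : ℝ)
    (h : (F ∩ Set.Iic x).Nonempty ∧ (F ∩ Set.Ici x).Nonempty) :
    kellererKernel F x = kk F x := by
  rw [kellererKernel, kk, c1, c2]
  split
  · next hx =>
    rw [aF_mem F x hx]
    simp
  · next hx =>
    rw [aF, if_pos h.1, bF, if_pos h.2]

lemma kk_meas (F : Set ℝ) (hFc : IsClosed F) : Measurable (kk F) := by
  apply Measure.measurable_of_measurable_coe
  intro s hs
  simp only [kk, Measure.coe_add, Pi.add_apply, Measure.smul_apply, smul_eq_mul]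
  have ha : Measurable (aF F) := (aF_mono F).measurable
  have hb : Measurable (bF F) := (bF_mono F).measurable
  have hc1 : Measurable (c1 F) := by
    apply Measurable.ite hFc.measurableSet measurable_const
    exact (hb.sub measurable_id).div (hb.sub ha)
  have hc2 : Measurable (c2 F) := by
    apply Measurable.ite hFc.measurableSet measurable_const
    exact (measurable_id.sub ha).div (hb.sub ha)
  exact ((ENNReal.measurable_ofReal.comp hc1).mul
      ((Measure.measurable_coe hs).comp (Measure.measurable_dirac.comp ha))).add
    ((ENNReal.measurable_ofReal.comp hc2).mul
      ((Measure.measurable_coe hs).comp (Measure.measurable_dirac.comp hb)))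
lemma dilate_decomp (F : Set ℝ) (hFc : IsClosed F) (η : Measure ℝ)
    (hfin : ∀ᵐ x ∂η, (F ∩ Set.Iic x).Nonempty ∧ (F ∩ Set.Ici x).Nonempty) :
    dilate η F
      = (η.withDensity (fun x => ENNReal.ofReal (c1 F x))).map (aF F)
        + (η.withDensity (fun x => ENNReal.ofReal (c2 F x))).map (bF F) := by
  have ha : Measurable (aF F) := (aF_mono F).measurable
  have hb : Measurable (bF F) := (bF_mono F).measurable
  have hc1 : Measurable (c1 F) := by
    apply Measurable.ite hFc.measurableSet measurable_const
    exact (hb.sub measurable_id).div (hb.sub ha)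
  have hc2 : Measurable (c2 F) := by
    apply Measurable.ite hFc.measurableSet measurable_const
    exact (measurable_id.sub ha).div (hb.sub ha)
  have h1 : kellererKernel F =ᵐ[η] kk F := hfin.mono (fun x hx => kk_eq F x hx)
  rw [dilate, Measure.bind, Measure.map_congr h1, ← Measure.bind]
  ext s hs
  rw [Measure.bind_apply hs (kk_meas F hFc).aemeasurable, Measure.add_apply,
    Measure.map_apply ha hs, Measure.map_apply hb hs,
    withDensity_apply _ (ha hs), withDensity_apply _ (hb hs),
    ← lintegral_indicator (ha hs), ← lintegral_indicator (hb hs)]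
  have : ∀ x, kk F x s
      = (aF F ⁻¹' s).indicator (fun x => ENNReal.ofReal (c1 F x)) x
        + (bF F ⁻¹' s).indicator (fun x => ENNReal.ofReal (c2 F x)) x := by
    intro x
    simp only [kk, Measure.coe_add, Pi.add_apply, Measure.smul_apply, smul_eq_mul,
      Measure.dirac_apply' _ hs, Set.indicator_apply, Set.mem_preimage]
    by_cases h1 : aF F x ∈ s <;> by_cases h2 : bF F x ∈ s <;> simp [h1, h2]
  rw [lintegral_congr this, lintegral_add_left]
  exact (ENNReal.measurable_ofReal.comp hc1).indicator (ha hs)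
lemma piece_integrable_iff (η : Measure ℝ) (g : ℝ → ℝ) (hg : Measurable g)
    (c : ℝ → NNReal) (hc : Measurable c) (φ : ℝ → ℝ) (hφ : Continuous φ) :
    Integrable φ ((η.withDensity (fun x => (c x : ENNReal))).map g)
      ↔ Integrable (fun x => (c x : ℝ) * φ (g x)) η := by
  rw [integrable_map_measure hφ.aestronglyMeasurable hg.aemeasurable,
    integrable_withDensity_iff_integrable_smul hc]
  simp_rw [NNReal.smul_def, smul_eq_mul]
  rfl

lemma piece_integral (η : Measure ℝ) (g : ℝ → ℝ) (hg : Measurable g)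
    (c : ℝ → NNReal) (hc : Measurable c) (φ : ℝ → ℝ) (hφ : Continuous φ) :
    ∫ y, φ y ∂((η.withDensity (fun x => (c x : ENNReal))).map g)
      = ∫ x, (c x : ℝ) * φ (g x) ∂η := by
  rw [integral_map hg.aemeasurable hφ.aestronglyMeasurable,
    integral_withDensity_eq_integral_smul hc]
  simp_rw [NNReal.smul_def, smul_eq_mul]

lemma bound_lemma (F : Set ℝ) (hFc : IsClosed F) (x₀ : ℝ) (hx₀ : x₀ ∈ F) (x : ℝ)
    (h : (F ∩ Set.Iic x).Nonempty ∧ (F ∩ Set.Ici x).Nonempty) :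
    |c1 F x * aF F x| ≤ 2 * |x| + |x₀| ∧ |c2 F x * bF F x| ≤ 2 * |x| + |x₀| := by
  have hax := le_abs_self x; have hax' := neg_abs_le x
  have hax0 := le_abs_self x₀; have hax0' := neg_abs_le x₀
  by_cases hxF : x ∈ F
  · rw [c1, c2, if_pos hxF, if_pos hxF, aF_mem F x hxF]
    constructor
    · rw [one_mul]
      rcases abs_cases x with ⟨he, _⟩ | ⟨he, _⟩ <;> rcases abs_cases x₀ with ⟨h0, _⟩ | ⟨h0, _⟩ <;>
        nlinarith [abs_nonneg x, abs_nonneg x₀]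
    · rw [zero_mul, abs_zero]
      nlinarith [abs_nonneg x, abs_nonneg x₀]
  · have ha := aF_lt F hFc x hxF h.1
    have hb := bF_gt F hFc x hxF h.2
    have h1 := c1_nonneg F hFc x h
    have h2 := c2_nonneg F hFc x h
    have hsum := c_add F hFc x h
    have hbary := c_bary F hFc x h
    have habs1 : |c1 F x * aF F x| = c1 F x * |aF F x| := by
      rw [abs_mul, abs_of_nonneg h1]
    have habs2 : |c2 F x * bF F x| = c2 F x * |bF F x| := by
      rw [abs_mul, abs_of_nonneg h2]
    rcases le_total x₀ x with hc | hc
    · -- x₀ ≤ aF F x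
      have hx0a : x₀ ≤ aF F x := by
        rw [aF, if_pos h.1]
        exact le_csSup ⟨x, fun w hw => hw.2⟩ ⟨hx₀, hc⟩
      have haabs : |aF F x| ≤ |x| + |x₀| := by
        rcases abs_cases (aF F x) with ⟨he, _⟩ | ⟨he, _⟩ <;> linarith [ha.2]
      have hb1 : |c1 F x * aF F x| ≤ |x| + |x₀| := by
        rw [habs1]
        calc c1 F x * |aF F x| ≤ 1 * |aF F x| := by
              apply mul_le_mul_of_nonneg_right _ (abs_nonneg _); linarith
          _ = |aF F x| := one_mul _
          _ ≤ |x| + |x₀| := haabs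
      refine ⟨by linarith [abs_nonneg x], ?_⟩
      have : c2 F x * bF F x = x - c1 F x * aF F x := by linarith
      rw [this]
      calc |x - c1 F x * aF F x| ≤ |x| + |c1 F x * aF F x| := abs_sub _ _
        _ ≤ 2 * |x| + |x₀| := by linarith
    · -- bF F x ≤ x₀
      have hx0b : bF F x ≤ x₀ := by
        rw [bF, if_pos h.2]
        exact csInf_le ⟨x, fun w hw => hw.2⟩ ⟨hx₀, hc⟩
      have hbabs : |bF F x| ≤ |x| + |x₀| := by
        rcases abs_cases (bF F x) with ⟨he, _⟩ | ⟨he, _⟩ <;> linarith [hb.2]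
      have hb2 : |c2 F x * bF F x| ≤ |x| + |x₀| := by
        rw [habs2]
        calc c2 F x * |bF F x| ≤ 1 * |bF F x| := by
              apply mul_le_mul_of_nonneg_right _ (abs_nonneg _); linarith
          _ = |bF F x| := one_mul _
          _ ≤ |x| + |x₀| := hbabs
      refine ⟨?_, by linarith [abs_nonneg x]⟩
      have : c1 F x * aF F x = x - c2 F x * bF F x := by linarith
      rw [this]
      calc |x - c2 F x * bF F x| ≤ |x| + |c2 F x * bF F x| := abs_sub _ _
        _ ≤ 2 * |x| + |x₀| := by linarith
theorem kellerer_dilation_properties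
    (F : Set ℝ) (hF : F.Nonempty) (hFc : IsClosed F)
    (η : Measure ℝ) [IsProbabilityMeasure η] (hη : Integrable (fun y => |y|) η)
    (hfin : ∀ᵐ x ∂η, (F ∩ Set.Iic x).Nonempty ∧ (F ∩ Set.Ici x).Nonempty) :
    dilate η F Fᶜ = 0 ∧
    ConvexOrder η (dilate η F) ∧
    dilate η F Set.univ = η Set.univ ∧
    ∫ y, y ∂(dilate η F) = ∫ y, y ∂η := by
  obtain ⟨x₀, hx₀⟩ := hF
  have ha : Measurable (aF F) := (aF_mono F).measurable
  have hb : Measurable (bF F) := (bF_mono F).measurable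
  have hc1 : Measurable (c1 F) := by
    apply Measurable.ite hFc.measurableSet measurable_const
    exact (hb.sub measurable_id).div (hb.sub ha)
  have hc2 : Measurable (c2 F) := by
    apply Measurable.ite hFc.measurableSet measurable_const
    exact (measurable_id.sub ha).div (hb.sub ha)
  have hd := dilate_decomp F hFc η hfin
  set ν1 := (η.withDensity (fun x => ENNReal.ofReal (c1 F x))).map (aF F) with hν1
  set ν2 := (η.withDensity (fun x => ENNReal.ofReal (c2 F x))).map (bF F) with hν2
  have hco1 : (fun x => ENNReal.ofReal (c1 F x))
      = (fun x => (((c1 F x).toNNReal : NNReal) : ENNReal)) := rfl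
  have hco2 : (fun x => ENNReal.ofReal (c2 F x))
      = (fun x => (((c2 F x).toNNReal : NNReal) : ENNReal)) := rfl
  have hc1ae : ∀ᵐ x ∂η, (((c1 F x).toNNReal : NNReal) : ℝ) = c1 F x :=
    hfin.mono fun x hx => Real.coe_toNNReal _ (c1_nonneg F hFc x hx)
  have hc2ae : ∀ᵐ x ∂η, (((c2 F x).toNNReal : NNReal) : ℝ) = c2 F x :=
    hfin.mono fun x hx => Real.coe_toNNReal _ (c2_nonneg F hFc x hx)
  -- part 1
  have haF_mem : ∀ᵐ x ∂η, aF F x ∈ F := hfin.mono (fun x hx => by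
    by_cases hxF : x ∈ F
    · rw [aF_mem F x hxF]; exact hxF
    · exact (aF_lt F hFc x hxF hx.1).1)
  have hbF_mem : ∀ᵐ x ∂η, bF F x ∈ F := hfin.mono (fun x hx => by
    by_cases hxF : x ∈ F
    · rw [bF_mem F x hxF]; exact hxF
    · exact (bF_gt F hFc x hxF hx.2).1)
  have p1 : dilate η F Fᶜ = 0 := by
    rw [hd, Measure.add_apply, Measure.map_apply ha hFc.measurableSet.compl,
      Measure.map_apply hb hFc.measurableSet.compl]
    have e1 : η (aF F ⁻¹' Fᶜ) = 0 := ae_iff.mp haF_mem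
    have e2 : η (bF F ⁻¹' Fᶜ) = 0 := ae_iff.mp hbF_mem
    rw [(withDensity_absolutelyContinuous η _) e1,
      (withDensity_absolutelyContinuous η _) e2, add_zero]
  -- part 3
  have p3 : dilate η F Set.univ = η Set.univ := by
    rw [hd, Measure.add_apply, Measure.map_apply ha MeasurableSet.univ,
      Measure.map_apply hb MeasurableSet.univ, Set.preimage_univ,
      Set.preimage_univ, withDensity_apply _ MeasurableSet.univ,
      withDensity_apply _ MeasurableSet.univ, Measure.restrict_univ,
      ← lintegral_add_left (show Measurable fun x => ENNReal.ofReal (c1 F x) from ENNReal.measurable_ofReal.comp hc1), ← lintegral_one]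
    apply lintegral_congr_ae
    refine hfin.mono fun x hx => ?_
    show ENNReal.ofReal (c1 F x) + ENNReal.ofReal (c2 F x) = 1
    rw [← ENNReal.ofReal_add (c1_nonneg F hFc x hx) (c2_nonneg F hFc x hx),
      c_add F hFc x hx, ENNReal.ofReal_one]
  -- generic piece facts
  have hiff1 : ∀ φ : ℝ → ℝ, Continuous φ →
      (Integrable φ ν1 ↔ Integrable (fun x => c1 F x * φ (aF F x)) η) := by
    intro φ hφ
    rw [hν1, hco1, piece_integrable_iff η _ ha _ hc1.real_toNNReal φ hφ]
    exact integrable_congr (hc1ae.mono fun x hx => by simp only [hx])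
  have hiff2 : ∀ φ : ℝ → ℝ, Continuous φ →
      (Integrable φ ν2 ↔ Integrable (fun x => c2 F x * φ (bF F x)) η) := by
    intro φ hφ
    rw [hν2, hco2, piece_integrable_iff η _ hb _ hc2.real_toNNReal φ hφ]
    exact integrable_congr (hc2ae.mono fun x hx => by simp only [hx])
  have hval1 : ∀ φ : ℝ → ℝ, Continuous φ →
      ∫ y, φ y ∂ν1 = ∫ x, c1 F x * φ (aF F x) ∂η := by
    intro φ hφ
    rw [hν1, hco1, piece_integral η _ ha _ hc1.real_toNNReal φ hφ]
    exact integral_congr_ae (hc1ae.mono fun x hx => by simp only [hx])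
  have hval2 : ∀ φ : ℝ → ℝ, Continuous φ →
      ∫ y, φ y ∂ν2 = ∫ x, c2 F x * φ (bF F x) ∂η := by
    intro φ hφ
    rw [hν2, hco2, piece_integral η _ hb _ hc2.real_toNNReal φ hφ]
    exact integral_congr_ae (hc2ae.mono fun x hx => by simp only [hx])
  -- integrability of id pieces
  have hbnd : Integrable (fun x => 2 * |x| + |x₀|) η := (hη.const_mul 2).add (integrable_const _)
  have hnorm : ∀ x : ℝ, ‖2 * |x| + |x₀|‖ = 2 * |x| + |x₀| := fun x => by
    rw [Real.norm_eq_abs, abs_of_nonneg (by positivity)]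
  have hint1 : Integrable (fun x => c1 F x * aF F x) η := by
    refine hbnd.mono (hc1.mul ha).aestronglyMeasurable (hfin.mono fun x hx => ?_)
    rw [Real.norm_eq_abs, hnorm]
    exact (bound_lemma F hFc x₀ hx₀ x hx).1
  have hint2 : Integrable (fun x => c2 F x * bF F x) η := by
    refine hbnd.mono (hc2.mul hb).aestronglyMeasurable (hfin.mono fun x hx => ?_)
    rw [Real.norm_eq_abs, hnorm]
    exact (bound_lemma F hFc x₀ hx₀ x hx).2
  -- part 4
  have hi1 : Integrable (fun y : ℝ => y) ν1 := (hiff1 (fun y => y) continuous_id).mpr hint1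
  have hi2 : Integrable (fun y : ℝ => y) ν2 := (hiff2 (fun y => y) continuous_id).mpr hint2
  have p4 : ∫ y, y ∂(dilate η F) = ∫ y, y ∂η := by
    rw [hd, integral_add_measure hi1 hi2, hval1 (fun y => y) continuous_id, hval2 (fun y => y) continuous_id,
      ← integral_add hint1 hint2]
    exact integral_congr_ae (hfin.mono fun x hx => c_bary F hFc x hx)
  -- part 2
  have p2 : ConvexOrder η (dilate η F) := by
    intro φ hφconv hφη hφd
    have hφcont : Continuous φ := continuousOn_univ.mp (hφconv.continuousOn isOpen_univ)
    rw [hd] at hφd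
    have h1 : Integrable φ ν1 := (integrable_add_measure.mp hφd).1
    have h2 : Integrable φ ν2 := (integrable_add_measure.mp hφd).2
    have g1 : Integrable (fun x => c1 F x * φ (aF F x)) η := (hiff1 φ hφcont).mp h1
    have g2 : Integrable (fun x => c2 F x * φ (bF F x)) η := (hiff2 φ hφcont).mp h2
    have heq : ∫ y, φ y ∂(dilate η F)
        = ∫ x, (c1 F x * φ (aF F x) + c2 F x * φ (bF F x)) ∂η := by
      rw [hd, integral_add_measure h1 h2, hval1 φ hφcont, hval2 φ hφcont,
        ← integral_add g1 g2]
    rw [heq]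
    apply integral_mono_ae hφη (g1.add g2)
    refine hfin.mono fun x hx => ?_
    show φ x ≤ c1 F x * φ (aF F x) + c2 F x * φ (bF F x)
    by_cases hxF : x ∈ F
    · rw [c1, c2, if_pos hxF, if_pos hxF, aF_mem F x hxF]
      simp
    · have hj := hφconv.2 (Set.mem_univ (aF F x)) (Set.mem_univ (bF F x))
        (c1_nonneg F hFc x hx) (c2_nonneg F hFc x hx) (c_add F hFc x hx)
      simp only [smul_eq_mul] at hj
      rwa [c_bary F hFc x hx] at hj
  exact ⟨p1, p2, p3, p4⟩
end

section
/- Let f : ℝ → ℝ be continuous and bounded below by an affine function. If x ∈ ℝ satisfies conv(f)(x) < f(x), then there exists ε > 0 such that conv(f) is affine on [x - ε, x + ε]. -/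
open MeasureTheory Set Filter Topology

/-- The convex hull (largest convex minorant) of a function `f : ℝ → ℝ`. -/
noncomputable def convEnv (f : ℝ → ℝ) (x : ℝ) : ℝ :=
  sSup {y : ℝ | ∃ g : ℝ → ℝ, ConvexOn ℝ Set.univ g ∧ (∀ z, g z ≤ f z) ∧ y = g x}

lemma affine_convexOn (a b : ℝ) : ConvexOn ℝ Set.univ (fun y => a * y + b) := by
  refine ⟨convex_univ, fun x _ y _ p q hp hq hpq => ?_⟩
  simp only [smul_eq_mul]
  apply le_of_eq
  linear_combination (-b) * hpq

lemma convEnv_bddAbove (f : ℝ → ℝ) (x : ℝ) :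
    BddAbove {y : ℝ | ∃ g : ℝ → ℝ, ConvexOn ℝ Set.univ g ∧ (∀ z, g z ≤ f z) ∧ y = g x} := by
  refine ⟨f x, fun y hy => ?_⟩
  obtain ⟨g, _, hle, rfl⟩ := hy
  exact hle x

lemma le_convEnv (f : ℝ → ℝ) {g : ℝ → ℝ} (hg : ConvexOn ℝ Set.univ g)
    (hle : ∀ z, g z ≤ f z) (z : ℝ) : g z ≤ convEnv f z :=
  le_csSup (convEnv_bddAbove f z) ⟨g, hg, hle, rfl⟩

lemma convEnv_le (f : ℝ → ℝ) (hbd : ∃ a b : ℝ, ∀ y : ℝ, a * y + b ≤ f y) (z : ℝ) :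
    convEnv f z ≤ f z := by
  obtain ⟨a, b, hab⟩ := hbd
  refine csSup_le ⟨a * z + b, fun y => a * y + b, affine_convexOn a b, hab, rfl⟩ ?_
  rintro y ⟨g, _, hle, rfl⟩
  exact hle z

lemma convEnv_convexOn (f : ℝ → ℝ) (hbd : ∃ a b : ℝ, ∀ y : ℝ, a * y + b ≤ f y) :
    ConvexOn ℝ Set.univ (convEnv f) := by
  obtain ⟨a, b, hab⟩ := hbd
  refine ⟨convex_univ, fun x _ y _ p q hp hq hpq => ?_⟩
  refine csSup_le ⟨a * (p • x + q • y) + b, fun y => a * y + b, affine_convexOn a b, hab, rfl⟩ ?_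
  rintro w ⟨g, hg, hle, rfl⟩
  calc g (p • x + q • y) ≤ p • g x + q • g y :=
        hg.2 (Set.mem_univ x) (Set.mem_univ y) hp hq hpq
    _ ≤ p • convEnv f x + q • convEnv f y := by
        simp only [smul_eq_mul]
        gcongr
        · exact le_csSup (convEnv_bddAbove f x) ⟨g, hg, hle, rfl⟩
        · exact le_csSup (convEnv_bddAbove f y) ⟨g, hg, hle, rfl⟩

set_option maxHeartbeats 1000000 in
theorem convEnv_affine_of_lt
    (f : ℝ → ℝ) (hf : Continuous f)
    (hbd : ∃ a b : ℝ, ∀ y : ℝ, a * y + b ≤ f y)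
    (x : ℝ) (hx : convEnv f x < f x) :
    ∃ ε > (0 : ℝ), ∃ α β : ℝ,
      ∀ y ∈ Set.Icc (x - ε) (x + ε), convEnv f y = α * y + β := by
  set u := convEnv f with hu
  have hucv : ConvexOn ℝ Set.univ u := convEnv_convexOn f hbd
  have hule : ∀ z, u z ≤ f z := convEnv_le f hbd
  have hucont : Continuous u := by
    have h := hucv.continuousOn isOpen_univ
    exact continuousOn_univ.mp h
  set c := u x with hc
  set d := f x - c with hd
  have hd0 : 0 < d := by simpa [hd] using hx
  have h1 : ∀ᶠ y in 𝓝 x, f x - d / 4 < f y :=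
    hf.continuousAt.eventually (eventually_gt_nhds (by linarith))
  have h2 : ∀ᶠ y in 𝓝 x, u y < c + d / 4 :=
    hucont.continuousAt.eventually (eventually_lt_nhds (by linarith))
  obtain ⟨r, hr0, hr⟩ := Metric.eventually_nhds_iff.mp (h1.and h2)
  set ε := r / 2 with hε
  have hε0 : 0 < ε := by positivity
  set a := x - ε with ha
  set b := x + ε with hb
  have hball : ∀ y ∈ Set.Icc a b, f x - d / 4 < f y ∧ u y < c + d / 4 := by
    intro y hy
    apply hr
    rw [Real.dist_eq, abs_sub_lt_iff]
    simp only [ha, hb, Set.mem_Icc] at hy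
    constructor <;> [skip; skip] <;> [linarith [hy.2, hr0]; linarith [hy.1, hr0]]
  have hab : a < b := by simp only [ha, hb]; linarith
  have hba' : (0:ℝ) < b - a := by linarith
  set α := (u b - u a) / (b - a) with hα
  set β := u a - α * a with hβ
  set L : ℝ → ℝ := fun y => α * y + β with hL
  -- inside the interval, u ≤ L
  have hinside : ∀ y ∈ Set.Icc a b, u y ≤ L y := by
    intro y hy
    have ht : (0:ℝ) ≤ (b - y) / (b - a) := by
      apply div_nonneg <;> linarith [hy.2]
    have hs : (0:ℝ) ≤ (y - a) / (b - a) := by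
      apply div_nonneg <;> linarith [hy.1]
    have hts : (b - y) / (b - a) + (y - a) / (b - a) = 1 := by
      field_simp
      ring
    have hyy : ((b - y) / (b - a)) • a + ((y - a) / (b - a)) • b = y := by
      simp only [smul_eq_mul]
      field_simp
      ring
    have h := hucv.2 (Set.mem_univ a) (Set.mem_univ b) ht hs hts
    rw [hyy] at h
    simp only [smul_eq_mul] at h
    rw [div_mul_eq_mul_div, div_mul_eq_mul_div, ← add_div, le_div_iff₀ hba'] at h
    -- h : u y * (b - a) ≤ (b - y) * u a + (y - a) * u b
    have key : (u y - u a) * (b - a) ≤ (u b - u a) * (y - a) := by linarith [h]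
    have h2 : u y - u a ≤ α * (y - a) := by
      rw [hα, div_mul_eq_mul_div, le_div_iff₀ hba']
      linarith [key]
    simp only [hL, hβ]
    linarith [h2]
  -- outside the interval, L ≤ u
  have houtside : ∀ y : ℝ, y ∉ Set.Icc a b → L y ≤ u y := by
    intro y hy
    rw [Set.mem_Icc, not_and_or] at hy
    have main : (u b - u a) * (y - a) ≤ (u y - u a) * (b - a) := by
      rcases hy with hy | hy
      · push_neg at hy
        have hby : (0:ℝ) < b - y := by linarith
        have ht : (0:ℝ) ≤ (b - a) / (b - y) := by
          apply div_nonneg <;> linarith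
        have hs : (0:ℝ) ≤ (a - y) / (b - y) := by
          apply div_nonneg <;> linarith
        have hts : (b - a) / (b - y) + (a - y) / (b - y) = 1 := by
          field_simp
          ring
        have hyy : ((b - a) / (b - y)) • y + ((a - y) / (b - y)) • b = a := by
          simp only [smul_eq_mul]
          field_simp
          ring
        have h := hucv.2 (Set.mem_univ y) (Set.mem_univ b) ht hs hts
        rw [hyy] at h
        simp only [smul_eq_mul] at h
        rw [div_mul_eq_mul_div, div_mul_eq_mul_div, ← add_div, le_div_iff₀ hby] at h
        -- h : u a * (b - y) ≤ (b - a) * u y + (a - y) * u b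
        linarith [h]
      · push_neg at hy
        have hya : (0:ℝ) < y - a := by linarith
        have ht : (0:ℝ) ≤ (y - b) / (y - a) := by
          apply div_nonneg <;> linarith
        have hs : (0:ℝ) ≤ (b - a) / (y - a) := by
          apply div_nonneg <;> linarith
        have hts : (y - b) / (y - a) + (b - a) / (y - a) = 1 := by
          field_simp
          ring
        have hyy : ((y - b) / (y - a)) • a + ((b - a) / (y - a)) • y = b := by
          simp only [smul_eq_mul]
          field_simp
          ring
        have h := hucv.2 (Set.mem_univ a) (Set.mem_univ y) ht hs hts
        rw [hyy] at h
        simp only [smul_eq_mul] at h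
        rw [div_mul_eq_mul_div, div_mul_eq_mul_div, ← add_div, le_div_iff₀ hya] at h
        -- h : u b * (y - a) ≤ (y - b) * u a + (b - a) * u y
        linarith [h]
    have h2 : α * (y - a) ≤ u y - u a := by
      rw [hα, div_mul_eq_mul_div, div_le_iff₀ hba']
      linarith [main]
    simp only [hL, hβ]
    linarith [h2]
  -- L ≤ f on [a,b]
  have hLf : ∀ y ∈ Set.Icc a b, L y ≤ f y := by
    intro y hy
    have h3 := hball y hy
    have h4 := hball a ⟨le_refl a, le_of_lt hab⟩
    have h5 := hball b ⟨le_of_lt hab, le_refl b⟩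
    have hw : (b - y) * u a + (y - a) * u b ≤ (b - a) * (c + d/4) := by
      linarith [mul_nonneg (by linarith [hy.2] : (0:ℝ) ≤ b - y)
          (by linarith [h4.2] : (0:ℝ) ≤ c + d/4 - u a),
        mul_nonneg (by linarith [hy.1] : (0:ℝ) ≤ y - a)
          (by linarith [h5.2] : (0:ℝ) ≤ c + d/4 - u b)]
    have key2 : (u b - u a) * (y - a) ≤ (c + d/4 - u a) * (b - a) := by linarith [hw]
    have h6 : α * (y - a) ≤ c + d/4 - u a := by
      rw [hα, div_mul_eq_mul_div, div_le_iff₀ hba']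
      linarith [key2]
    have hLyb : L y ≤ c + d/4 := by
      simp only [hL, hβ]
      linarith [h6]
    have hcd : c + d / 4 ≤ f x - d / 4 := by
      simp only [hd]
      linarith
    exact le_trans hLyb (le_trans hcd h3.1.le)
  -- the max of u and L is a convex minorant of f
  set g : ℝ → ℝ := fun y => max (u y) (L y) with hg
  have hgcv : ConvexOn ℝ Set.univ g := hucv.sup (affine_convexOn α β)
  have hgle : ∀ z, g z ≤ f z := by
    intro z
    by_cases hz : z ∈ Set.Icc a b
    · exact max_le (hule z) (hLf z hz)
    · exact max_le (hule z) (le_trans (houtside z hz) (hule z))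
  have hLu : ∀ z, L z ≤ u z := fun z =>
    le_trans (le_max_right (u z) (L z)) (le_convEnv f hgcv hgle z)
  exact ⟨ε, hε0, α, β, fun y hy => le_antisymm (hinside y hy) (hLu y)⟩
end

section
/- Monotonicity of the shadow: if η ≤_c η' and both shadows S^ν(η), S^ν(η') exist, then S^ν(η) ≤_c S^ν(η'). -/
open MeasureTheory Set Filter Topology

/-- `ξ` is the shadow of `η` in `ν`. -/
def IsShadow (ν η ξ : MeasureTheory.Measure ℝ) : Prop :=
  ConvexOrder η ξ ∧ ξ ≤ ν ∧
    ∀ ξ' : MeasureTheory.Measure ℝ, ConvexOrder η ξ' → ξ' ≤ ν → ConvexOrder ξ ξ'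

/-! ### Auxiliary: subgradients of a convex function on ℝ -/

/-- A subgradient of `φ` at `a`: the supremum of slopes from the left. -/
noncomputable def subgrad (φ : ℝ → ℝ) (a : ℝ) : ℝ :=
  sSup ((fun x => (φ a - φ x) / (a - x)) '' Iio a)

lemma slope_mono_of_convex {φ : ℝ → ℝ} (hφ : ConvexOn ℝ Set.univ φ) {x y z : ℝ}
    (hxy : x < y) (hyz : y < z) :
    (φ y - φ x) / (y - x) ≤ (φ z - φ y) / (z - y) :=
  hφ.slope_mono_adjacent (Set.mem_univ _) (Set.mem_univ _) hxy hyz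

lemma subgrad_bddAbove {φ : ℝ → ℝ} (hφ : ConvexOn ℝ Set.univ φ) (a : ℝ) :
    BddAbove ((fun x => (φ a - φ x) / (a - x)) '' Iio a) := by
  refine ⟨(φ (a + 1) - φ a) / (a + 1 - a), ?_⟩
  rintro m ⟨x, hx, rfl⟩
  exact slope_mono_of_convex hφ hx (by linarith)

lemma slope_le_subgrad {φ : ℝ → ℝ} (hφ : ConvexOn ℝ Set.univ φ) {x a : ℝ} (hxa : x < a) :
    (φ a - φ x) / (a - x) ≤ subgrad φ a :=
  le_csSup (subgrad_bddAbove hφ a) ⟨x, hxa, rfl⟩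

lemma subgrad_le_slope {φ : ℝ → ℝ} (hφ : ConvexOn ℝ Set.univ φ) {a y : ℝ} (hay : a < y) :
    subgrad φ a ≤ (φ y - φ a) / (y - a) := by
  refine csSup_le ⟨(φ a - φ (a - 1)) / (a - (a - 1)), ⟨a - 1, by simp, rfl⟩⟩ ?_
  rintro m ⟨x, hx, rfl⟩
  exact slope_mono_of_convex hφ hx hay

/-- The supporting line at `a` lies below `φ`. -/
lemma subgrad_support {φ : ℝ → ℝ} (hφ : ConvexOn ℝ Set.univ φ) (a x : ℝ) :
    φ a + subgrad φ a * (x - a) ≤ φ x := by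
  rcases lt_trichotomy x a with h | h | h
  · have h1 := slope_le_subgrad hφ h
    have hpos : (0:ℝ) < a - x := by linarith
    rw [div_le_iff₀ hpos] at h1
    nlinarith
  · simp [h]
  · have h1 := subgrad_le_slope hφ h
    have hpos : (0:ℝ) < x - a := by linarith
    rw [le_div_iff₀ hpos] at h1
    nlinarith

lemma subgrad_mono {φ : ℝ → ℝ} (hφ : ConvexOn ℝ Set.univ φ) : Monotone (subgrad φ) := by
  intro a b hab
  rcases eq_or_lt_of_le hab with rfl | hab
  · exact le_rfl
  · calc subgrad φ a ≤ (φ b - φ a) / (b - a) := subgrad_le_slope hφ hab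
      _ ≤ subgrad φ b := slope_le_subgrad hφ hab

/-! ### The supporting line and finite maxima of supporting lines -/

noncomputable def lineAt (φ : ℝ → ℝ) (q : ℝ) : ℝ → ℝ :=
  fun x => φ q + subgrad φ q * (x - q)

lemma lineAt_le {φ : ℝ → ℝ} (hφ : ConvexOn ℝ Set.univ φ) (q x : ℝ) :
    lineAt φ q x ≤ φ x := subgrad_support hφ q x

lemma convexOn_affine (c m q : ℝ) : ConvexOn ℝ Set.univ (fun x => c + m * (x - q)) := by
  refine ⟨convex_univ, ?_⟩
  intro x _ y _ a b ha hb hab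
  simp only [smul_eq_mul]
  apply le_of_eq
  linear_combination (m * q - c) * hab

lemma convexOn_lineAt (φ : ℝ → ℝ) (q : ℝ) : ConvexOn ℝ Set.univ (lineAt φ q) :=
  convexOn_affine _ _ _

lemma integrable_lineAt {φ : ℝ → ℝ} {μ : Measure ℝ} [IsFiniteMeasure μ]
    (hμ : Integrable (fun y => |y|) μ) (q : ℝ) : Integrable (lineAt φ q) μ := by
  have hid : Integrable (fun y : ℝ => y) μ := by
    have h := (integrable_norm_iff (aestronglyMeasurable_id (μ := μ))).mp
      (by simpa [Real.norm_eq_abs] using hμ)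
    exact h
  have : (lineAt φ q) = fun x => φ q + (subgrad φ q * x - subgrad φ q * q) := by
    funext x; simp [lineAt]; ring
  rw [this]
  exact (integrable_const _).add ((hid.const_mul _).sub (integrable_const _))

/-- Finite maxima of the supporting lines at points `e 0, …, e N`. -/
noncomputable def Fmax (φ : ℝ → ℝ) (e : ℕ → ℝ) : ℕ → ℝ → ℝ
  | 0 => lineAt φ (e 0)
  | (N + 1) => fun x => max (Fmax φ e N x) (lineAt φ (e (N + 1)) x)

lemma convexOn_Fmax (φ : ℝ → ℝ) (e : ℕ → ℝ) (N : ℕ) : ConvexOn ℝ Set.univ (Fmax φ e N) := by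
  induction N with
  | zero => exact convexOn_lineAt φ (e 0)
  | succ N ih => exact ih.sup (convexOn_lineAt φ (e (N + 1)))

lemma integrable_Fmax {φ : ℝ → ℝ} {μ : Measure ℝ} [IsFiniteMeasure μ]
    (hμ : Integrable (fun y => |y|) μ) (e : ℕ → ℝ) (N : ℕ) : Integrable (Fmax φ e N) μ := by
  induction N with
  | zero => exact integrable_lineAt hμ (e 0)
  | succ N ih => exact ih.sup (integrable_lineAt hμ (e (N + 1)))

lemma Fmax_le {φ : ℝ → ℝ} (hφ : ConvexOn ℝ Set.univ φ) (e : ℕ → ℝ) (N : ℕ) (x : ℝ) :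
    Fmax φ e N x ≤ φ x := by
  induction N with
  | zero => exact lineAt_le hφ (e 0) x
  | succ N ih => exact max_le ih (lineAt_le hφ (e (N + 1)) x)

lemma Fmax_monotone (φ : ℝ → ℝ) (e : ℕ → ℝ) (x : ℝ) :
    Monotone (fun N => Fmax φ e N x) := by
  refine monotone_nat_of_le_succ fun N => ?_
  exact le_max_left _ _

lemma lineAt_le_Fmax (φ : ℝ → ℝ) (e : ℕ → ℝ) (n : ℕ) (x : ℝ) :
    lineAt φ (e n) x ≤ Fmax φ e n x := by
  cases n with
  | zero => exact le_rfl
  | succ N => exact le_max_right _ _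

/-- Pointwise convergence of the maxima of supporting lines at a dense set to `φ`. -/
lemma tendsto_Fmax {φ : ℝ → ℝ} (hφ : ConvexOn ℝ Set.univ φ) (e : ℕ → ℝ)
    (he : ∀ q : ℚ, ∃ n, e n = (q : ℝ)) (x : ℝ) :
    Tendsto (fun N => Fmax φ e N x) atTop (𝓝 (φ x)) := by
  have hbnd : ∀ N, Fmax φ e N x ≤ φ x := fun N => Fmax_le hφ e N x
  have hbdd : BddAbove (Set.range fun N => Fmax φ e N x) := by
    refine ⟨φ x, ?_⟩; rintro m ⟨N, rfl⟩; exact hbnd N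
  have htend := tendsto_atTop_ciSup (Fmax_monotone φ e x) hbdd
  have hsup : (⨆ N, Fmax φ e N x) = φ x := by
    refine le_antisymm (ciSup_le hbnd) ?_
    refine le_of_forall_sub_le fun ε hε => ?_
    set B := max |subgrad φ (x - 1)| |subgrad φ x| with hB_def
    have hB : 0 ≤ B := le_trans (abs_nonneg _) (le_max_left _ _)
    set δ := min 1 (ε / (2 * B + 1)) with hδ_def
    have hδpos : 0 < δ := lt_min one_pos (div_pos hε (by linarith))
    have hδ1 : δ ≤ 1 := min_le_left _ _
    have hδε : 2 * B * δ ≤ ε := by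
      have h1 : δ ≤ ε / (2 * B + 1) := min_le_right _ _
      have h2 : δ * (2 * B + 1) ≤ ε := by
        rw [← le_div_iff₀ (by linarith : (0:ℝ) < 2 * B + 1)]; exact h1
      nlinarith
    obtain ⟨q, hq1, hq2⟩ := exists_rat_btwn (show x - δ < x by linarith)
    have hq_lb : x - 1 ≤ (q : ℝ) := by linarith
    have hgx : |subgrad φ x| ≤ B := le_max_right _ _
    have hgq_ub : subgrad φ q ≤ subgrad φ x := subgrad_mono hφ hq2.le
    have hgq_lb : subgrad φ (x - 1) ≤ subgrad φ q := subgrad_mono hφ hq_lb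
    have hgq : |subgrad φ (q : ℝ)| ≤ B := by
      rw [abs_le]
      constructor
      · have := neg_abs_le (subgrad φ (x - 1))
        have h := le_max_left |subgrad φ (x - 1)| |subgrad φ x|
        linarith
      · have := le_abs_self (subgrad φ x)
        linarith
    -- lower bound on φ q
    have hsupp := subgrad_support hφ x (q : ℝ)
    have h3 : subgrad φ x * (x - (q : ℝ)) ≤ B * δ := by
      have habs := abs_le.1 hgx
      nlinarith
    have hφq : φ x - B * δ ≤ φ (q : ℝ) := by nlinarith
    -- lower bound on the line value at x
    have h4 : -(B * δ) ≤ subgrad φ (q : ℝ) * (x - (q : ℝ)) := by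
      have habs := abs_le.1 hgq
      nlinarith
    have hline : φ x - 2 * B * δ ≤ lineAt φ (q : ℝ) x := by
      simp only [lineAt]; nlinarith
    obtain ⟨n, hn⟩ := he q
    have h5 : lineAt φ (e n) x ≤ ⨆ N, Fmax φ e N x :=
      le_trans (lineAt_le_Fmax φ e n x) (le_ciSup hbdd n)
    rw [hn] at h5
    linarith
  rwa [hsup] at htend

/-! ### Transitivity of the convex order -/

lemma convexOrder_trans {μ1 μ2 μ3 : Measure ℝ}
    [IsFiniteMeasure μ1] [IsFiniteMeasure μ2] [IsFiniteMeasure μ3]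
    (h1 : Integrable (fun y => |y|) μ1) (h2 : Integrable (fun y => |y|) μ2)
    (h3 : Integrable (fun y => |y|) μ3)
    (h12 : ConvexOrder μ1 μ2) (h23 : ConvexOrder μ2 μ3) : ConvexOrder μ1 μ3 := by
  intro φ hφ hint1 hint3
  obtain ⟨e0, he0⟩ := exists_surjective_nat ℚ
  set e : ℕ → ℝ := fun n => ((e0 n : ℚ) : ℝ) with he_def
  have he : ∀ q : ℚ, ∃ n, e n = (q : ℝ) := fun q => by
    obtain ⟨n, hn⟩ := he0 q
    exact ⟨n, by simp only [he_def, hn]⟩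
  have hI1 : ∀ N, Integrable (Fmax φ e N) μ1 := integrable_Fmax h1 e
  have hI2 : ∀ N, Integrable (Fmax φ e N) μ2 := integrable_Fmax h2 e
  have hI3 : ∀ N, Integrable (Fmax φ e N) μ3 := integrable_Fmax h3 e
  have key : ∀ N, ∫ x, Fmax φ e N x ∂μ1 ≤ ∫ x, φ x ∂μ3 := by
    intro N
    have a12 := h12 (Fmax φ e N) (convexOn_Fmax φ e N) (hI1 N) (hI2 N)
    have a23 := h23 (Fmax φ e N) (convexOn_Fmax φ e N) (hI2 N) (hI3 N)
    have a3 : ∫ x, Fmax φ e N x ∂μ3 ≤ ∫ x, φ x ∂μ3 :=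
      integral_mono (hI3 N) hint3 fun x => Fmax_le hφ e N x
    linarith
  have hmct : Tendsto (fun N => ∫ x, Fmax φ e N x ∂μ1) atTop (𝓝 (∫ x, φ x ∂μ1)) := by
    refine integral_tendsto_of_tendsto_of_monotone hI1 hint1 ?_ ?_
    · exact Eventually.of_forall fun x => Fmax_monotone φ e x
    · exact Eventually.of_forall fun x => tendsto_Fmax hφ e he x
  exact le_of_tendsto hmct (Eventually.of_forall key)

theorem shadow_monotone
    (η η' ν s s' : Measure ℝ) [IsFiniteMeasure η] [IsFiniteMeasure η'] [IsFiniteMeasure ν]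
    (hη : Integrable (fun y => |y|) η) (hη' : Integrable (fun y => |y|) η')
    (hν : Integrable (fun y => |y|) ν)
    (hmass : η Set.univ = η' Set.univ)
    (hc : ConvexOrder η η')
    (hs : IsShadow ν η s) (hs' : IsShadow ν η' s') :
    ConvexOrder s s' := by
  have hfin : IsFiniteMeasure s' := isFiniteMeasure_of_le ν hs'.2.1
  have hs'int : Integrable (fun y => |y|) s' := hν.mono_measure hs'.2.1
  have htrans : ConvexOrder η s' := convexOrder_trans hη hη' hs'int hc hs'.1
  exact hs.2.2 s' htrans hs'.2.1
end

section
/- Convergence in the topology T₁ (weak convergence plus convergence of first absolute moments) implies uniform integrability: if (μ_n) converges in T₁, then limsup_{K→∞} sup_n ∫ |x|·1_{|x|≥K} dμ_n(x) = 0. -/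
open MeasureTheory Set Filter Topology

/-- Weak convergence of measures: convergence of integrals of bounded continuous functions. -/
def WeakTendsto (μs : ℕ → MeasureTheory.Measure ℝ) (μ : MeasureTheory.Measure ℝ) : Prop :=
  ∀ f : ℝ → ℝ, Continuous f → (∃ C : ℝ, ∀ x, |f x| ≤ C) →
    Tendsto (fun n => ∫ x, f x ∂(μs n)) atTop (nhds (∫ x, f x ∂μ))

/-- Convergence in the topology `T₁`. -/
def T1Tendsto (μs : ℕ → MeasureTheory.Measure ℝ) (μ : MeasureTheory.Measure ℝ) : Prop :=
  WeakTendsto μs μ ∧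
    Tendsto (fun n => ∫ x, |x| ∂(μs n)) atTop (nhds (∫ x, |x| ∂μ))


lemma minIntegrable (ν : MeasureTheory.Measure ℝ) [IsFiniteMeasure ν]
    (hint : Integrable (fun y => |y|) ν) (K : ℝ) (hK : 0 ≤ K) :
    Integrable (fun x => min |x| K) ν := by
  refine hint.mono ((continuous_abs.min continuous_const).aestronglyMeasurable) ?_
  refine ae_of_all _ fun x => ?_
  rw [Real.norm_eq_abs, Real.norm_eq_abs, abs_of_nonneg (le_min (abs_nonneg x) hK),
    abs_abs]
  exact min_le_left _ _

lemma minTendsto (ν : MeasureTheory.Measure ℝ) [IsFiniteMeasure ν]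
    (hint : Integrable (fun y => |y|) ν) :
    Tendsto (fun K : ℝ => ∫ x, min |x| K ∂ν) atTop (nhds (∫ x, |x| ∂ν)) := by
  apply tendsto_integral_filter_of_dominated_convergence (fun x => |x|)
  · exact Eventually.of_forall fun K => ((continuous_abs.min continuous_const).aestronglyMeasurable)
  · filter_upwards [eventually_ge_atTop (0:ℝ)] with K hK
    refine ae_of_all _ fun x => ?_
    rw [Real.norm_eq_abs, abs_of_nonneg (le_min (abs_nonneg x) hK)]
    exact min_le_left _ _
  · exact hint
  · refine ae_of_all _ fun x => ?_
    refine Tendsto.congr' ?_ tendsto_const_nhds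
    filter_upwards [eventually_ge_atTop (|x|)] with K hK
    exact (min_eq_left hK).symm

lemma exists_K (ν : MeasureTheory.Measure ℝ) [IsFiniteMeasure ν]
    (hint : Integrable (fun y => |y|) ν) {ε : ℝ} (hε : 0 < ε) :
    ∃ K : ℝ, 0 < K ∧ (∫ x, |x| ∂ν) - (∫ x, min |x| K ∂ν) < ε := by
  have h := (minTendsto ν hint).const_sub (∫ x, |x| ∂ν)
  rw [sub_self] at h
  have h2 : ∀ᶠ K : ℝ in atTop, (∫ x, |x| ∂ν) - (∫ x, min |x| K ∂ν) < ε :=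
    h.eventually_lt_const hε
  obtain ⟨K, hK1, hK2⟩ := (h2.and (eventually_gt_atTop (0:ℝ))).exists
  exact ⟨K, hK2, hK1⟩

lemma keyIneq (ν : MeasureTheory.Measure ℝ) [IsFiniteMeasure ν]
    (hint : Integrable (fun y => |y|) ν) {K : ℝ} (hK : 0 < K) :
    ∫ x in {x : ℝ | 2*K ≤ |x|}, |x| ∂ν
      ≤ 2 * ((∫ x, |x| ∂ν) - ∫ x, min |x| K ∂ν) := by
  have hs : MeasurableSet {x : ℝ | 2*K ≤ |x|} :=
    (isClosed_le continuous_const continuous_abs).measurableSet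
  have hmin := minIntegrable ν hint K hK.le
  rw [← integral_indicator hs, ← integral_sub hint hmin, ← MeasureTheory.integral_const_mul]
  refine integral_mono (hint.indicator hs) (((hint.sub hmin)).const_mul 2) fun x => ?_
  by_cases h : x ∈ {x : ℝ | 2*K ≤ |x|}
  · rw [Set.indicator_of_mem h]
    have hx : 2*K ≤ |x| := h
    have : min |x| K = K := min_eq_right (by linarith)
    rw [this]; linarith
  · rw [Set.indicator_of_notMem h]
    have : min |x| K ≤ |x| := min_le_left _ _
    simp only
    linarith

lemma setMono (ν : MeasureTheory.Measure ℝ) (hint : Integrable (fun y => |y|) ν)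
    {c K : ℝ} (hc : c ≤ K) :
    ∫ x in {x : ℝ | K ≤ |x|}, |x| ∂ν ≤ ∫ x in {x : ℝ | c ≤ |x|}, |x| ∂ν := by
  refine setIntegral_mono_set hint.integrableOn (ae_of_all _ fun x => abs_nonneg x) ?_
  exact HasSubset.Subset.eventuallyLE fun x hx => le_trans hc hx

lemma mainKey (μs : ℕ → Measure ℝ) (hfin : ∀ n, IsFiniteMeasure (μs n))
    (hmom : ∀ n, Integrable (fun y => |y|) (μs n))
    (μ : Measure ℝ) [IsFiniteMeasure μ] (hμ : Integrable (fun y => |y|) μ)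
    (hconv : T1Tendsto μs μ) {ε : ℝ} (hε : 0 < ε) :
    ∃ K₀ : ℝ, ∀ n, ∫ x in {x : ℝ | K₀ ≤ |x|}, |x| ∂(μs n) ≤ ε := by
  obtain ⟨K₁, hK₁pos, hK₁⟩ := exists_K μ hμ (by linarith : 0 < ε/4)
  have hcont : Continuous fun x : ℝ => min |x| K₁ := continuous_abs.min continuous_const
  have hbd : ∃ C : ℝ, ∀ x, |min |x| K₁| ≤ C := by
    refine ⟨K₁, fun x => abs_le.2 ⟨le_min (by linarith [abs_nonneg x]) (by linarith),
      min_le_right _ _⟩⟩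
  have T := hconv.2.sub (hconv.1 _ hcont hbd)
  have hlt : (∫ x, |x| ∂μ) - ∫ x, min |x| K₁ ∂μ < ε/2 := by linarith
  obtain ⟨N, hN⟩ := eventually_atTop.1 (T.eventually_lt_const hlt)
  choose k hkpos hk using fun n => exists_K (μs n) (hmom n) (half_pos hε)
  set B : ℝ := ∑ n ∈ Finset.range N, |k n| with hB
  refine ⟨2 * max K₁ B, fun n => ?_⟩
  haveI := hfin n
  rcases le_or_gt N n with hn | hn
  · have h1 : ∫ x in {x : ℝ | 2 * max K₁ B ≤ |x|}, |x| ∂(μs n)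
        ≤ ∫ x in {x : ℝ | 2 * K₁ ≤ |x|}, |x| ∂(μs n) :=
      setMono (μs n) (hmom n) (by nlinarith [le_max_left K₁ B])
    have h2 := keyIneq (μs n) (hmom n) hK₁pos
    have h3 := hN n hn
    linarith
  · have hkB : k n ≤ B := by
      calc k n ≤ |k n| := le_abs_self _
        _ ≤ B := Finset.single_le_sum (fun i _ => abs_nonneg (k i))
            (Finset.mem_range.2 hn)
    have h1 : ∫ x in {x : ℝ | 2 * max K₁ B ≤ |x|}, |x| ∂(μs n)
        ≤ ∫ x in {x : ℝ | 2 * k n ≤ |x|}, |x| ∂(μs n) :=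
      setMono (μs n) (hmom n) (by nlinarith [le_max_right K₁ B])
    have h2 := keyIneq (μs n) (hmom n) (hkpos n)
    have h3 := hk n
    linarith

theorem T1_convergence_uniformly_integrable
    (μs : ℕ → Measure ℝ) (hfin : ∀ n, IsFiniteMeasure (μs n))
    (hmom : ∀ n, Integrable (fun y => |y|) (μs n))
    (μ : Measure ℝ) [IsFiniteMeasure μ] (hμ : Integrable (fun y => |y|) μ)
    (hconv : T1Tendsto μs μ) :
    Tendsto (fun K : ℝ => ⨆ n : ℕ, ∫⁻ x in {x : ℝ | K ≤ |x|}, ENNReal.ofReal |x| ∂(μs n))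
      atTop (nhds 0) := by
  rw [ENNReal.tendsto_atTop_zero]
  intro ε hε
  have hmin : min ε 1 ≠ ⊤ := ne_top_of_le_ne_top ENNReal.one_ne_top (min_le_right _ _)
  have hminpos : 0 < (min ε 1).toReal := ENNReal.toReal_pos (lt_min hε zero_lt_one).ne' hmin
  obtain ⟨K₀, hK₀⟩ := mainKey μs hfin hmom μ hμ hconv hminpos
  refine ⟨K₀, fun K hK => ?_⟩
  refine iSup_le fun n => ?_
  haveI := hfin n
  calc ∫⁻ x in {x : ℝ | K ≤ |x|}, ENNReal.ofReal |x| ∂(μs n)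
      ≤ ∫⁻ x in {x : ℝ | K₀ ≤ |x|}, ENNReal.ofReal |x| ∂(μs n) :=
        lintegral_mono_set fun x hx => le_trans hK hx
    _ = ENNReal.ofReal (∫ x in {x : ℝ | K₀ ≤ |x|}, |x| ∂(μs n)) :=
        (ofReal_integral_eq_lintegral_ofReal (hmom n).integrableOn
          (ae_of_all _ fun x => abs_nonneg x)).symm
    _ ≤ ENNReal.ofReal ((min ε 1).toReal) := ENNReal.ofReal_le_ofReal (hK₀ n)
    _ = min ε 1 := ENNReal.ofReal_toReal hmin
    _ ≤ ε := min_le_left _ _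
end

section
/- Let (μ_n) be a sequence of finite measures on ℝ converging in the topology T₁. Then there exists a finite measure η ∈ M₁(ℝ) with ∫φ dμ_n ≤ ∫φ dη for all n and all non-negative convex functions φ; moreover η can be chosen as a discrete measure supported on a sequence of points ±K_m. -/
open MeasureTheory Set Filter Topology

noncomputable def gK (K : ℝ) (x : ℝ) : ℝ := max (|x| - K) 0

lemma gK_cont (K : ℝ) : Continuous (gK K) :=
  (continuous_abs.sub continuous_const).max continuous_const

lemma gK_nonneg (K x : ℝ) : 0 ≤ gK K x := le_max_right _ _

lemma gK_le_abs {K : ℝ} (hK : 0 ≤ K) (x : ℝ) : gK K x ≤ |x| :=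
  max_le (by linarith [abs_nonneg x]) (abs_nonneg x)

lemma gK_eq (K x : ℝ) : gK K x = |x| - min |x| K := by
  rcases le_total (|x|) K with h | h
  · simp [gK, max_eq_right (by linarith : |x| - K ≤ 0), min_eq_left h]
  · simp [gK, max_eq_left (by linarith : (0:ℝ) ≤ |x| - K), min_eq_right h]

lemma gK_anti {K K' : ℝ} (h : K ≤ K') (x : ℝ) : gK K' x ≤ gK K x :=
  max_le_max (by linarith) le_rfl

lemma gK_int {K : ℝ} (hK : 0 ≤ K) (ν : Measure ℝ) (hν : Integrable (fun x => |x|) ν) :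
    Integrable (gK K) ν := by
  refine hν.mono ((gK_cont K).aestronglyMeasurable) (ae_of_all _ fun x => ?_)
  rw [Real.norm_eq_abs, Real.norm_eq_abs, abs_of_nonneg (gK_nonneg K x), abs_abs]
  exact gK_le_abs hK x

lemma min_int (K : ℝ) (ν : Measure ℝ) [IsFiniteMeasure ν] :
    Integrable (fun x => min |x| K) ν := by
  refine (integrable_const (|K|)).mono
    ((continuous_abs.min continuous_const).aestronglyMeasurable) (ae_of_all _ fun x => ?_)
  rw [Real.norm_eq_abs, Real.norm_eq_abs, abs_abs]
  rcases le_total (|x|) K with h | h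
  · rw [min_eq_left h, abs_of_nonneg (abs_nonneg x)]
    exact h.trans (le_abs_self K)
  · rw [min_eq_right h]

lemma gK_tendsto_zero (ν : Measure ℝ) [IsFiniteMeasure ν]
    (hν : Integrable (fun x => |x|) ν) :
    Tendsto (fun j : ℕ => ∫ x, gK j x ∂ν) atTop (nhds 0) := by
  have h0 : (0:ℝ) = ∫ x, (0:ℝ) ∂ν := by simp
  rw [h0]
  refine tendsto_integral_of_dominated_convergence (fun x => |x|)
    (fun j => ((gK_cont j).aestronglyMeasurable)) hν
    (fun j => ae_of_all _ fun x => ?_) (ae_of_all _ fun x => ?_)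
  · rw [Real.norm_eq_abs, abs_of_nonneg (gK_nonneg _ x)]
    exact gK_le_abs (Nat.cast_nonneg j) x
  · refine tendsto_const_nhds.congr' ?_
    filter_upwards [eventually_ge_atTop (⌈|x|⌉₊)] with j hj
    have : |x| ≤ (j:ℝ) := le_trans (Nat.le_ceil _) (by exact_mod_cast hj)
    simp [gK, max_eq_right (by linarith : |x| - (j:ℝ) ≤ 0)]

lemma gK_tendsto_n (μs : ℕ → Measure ℝ) (hfin : ∀ n, IsFiniteMeasure (μs n))
    (hmom : ∀ n, Integrable (fun y => |y|) (μs n))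
    (μ : Measure ℝ) [IsFiniteMeasure μ] (hμ : Integrable (fun y => |y|) μ)
    (hconv : T1Tendsto μs μ) {K : ℝ} (hK : 0 ≤ K) :
    Tendsto (fun n => ∫ x, gK K x ∂(μs n)) atTop (nhds (∫ x, gK K x ∂μ)) := by
  have hmin : Tendsto (fun n => ∫ x, min |x| K ∂(μs n)) atTop (nhds (∫ x, min |x| K ∂μ)) := by
    refine hconv.1 _ (continuous_abs.min continuous_const) ⟨K, fun x => ?_⟩
    rcases le_total (|x|) K with h | h
    · rw [min_eq_left h, abs_of_nonneg (abs_nonneg x)]; exact h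
    · rw [min_eq_right h, abs_of_nonneg hK]
  have key : ∀ (ν : Measure ℝ) [IsFiniteMeasure ν], Integrable (fun y => |y|) ν →
      ∫ x, gK K x ∂ν = (∫ x, |x| ∂ν) - ∫ x, min |x| K ∂ν := by
    intro ν _ hν
    rw [← integral_sub hν (min_int K ν)]
    exact integral_congr_ae (ae_of_all _ fun x => gK_eq K x)
  have : (fun n => ∫ x, gK K x ∂(μs n))
      = fun n => (∫ x, |x| ∂(μs n)) - ∫ x, min |x| K ∂(μs n) := by
    funext n; haveI := hfin n; exact key _ (hmom n)
  rw [this, key μ hμ]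
  exact (hconv.2).sub hmin

lemma ui_lemma (μs : ℕ → Measure ℝ) (hfin : ∀ n, IsFiniteMeasure (μs n))
    (hmom : ∀ n, Integrable (fun y => |y|) (μs n))
    (μ : Measure ℝ) [IsFiniteMeasure μ] (hμ : Integrable (fun y => |y|) μ)
    (hconv : T1Tendsto μs μ) :
    ∀ ε : ℝ, 0 < ε → ∃ L : ℝ, 1 ≤ L ∧ ∀ n,
      ∫⁻ x in {x : ℝ | L < |x|}, ENNReal.ofReal |x| ∂(μs n) ≤ ENNReal.ofReal ε := by
  intro ε hε
  -- step 1: find K ≥ 1 with ∀ n, ∫ gK K dμs n ≤ ε/2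
  obtain ⟨K, hK1, hKall⟩ : ∃ K : ℝ, 1 ≤ K ∧ ∀ n, ∫ x, gK K x ∂(μs n) ≤ ε/2 := by
    have hε4 : (0:ℝ) < ε/4 := by positivity
    have hε2 : (0:ℝ) < ε/2 := by positivity
    have hμ0 := gK_tendsto_zero μ hμ
    obtain ⟨j₀, hj₀⟩ := eventually_atTop.1 (hμ0.eventually (eventually_lt_nhds hε4))
    set j₁ : ℕ := max j₀ 1 with hj₁def
    have hj₁ : ∫ x, gK (j₁:ℝ) x ∂μ < ε/4 := hj₀ j₁ (le_max_left _ _)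
    have hn := gK_tendsto_n μs hfin hmom μ hμ hconv (K := (j₁:ℝ)) (by positivity)
    obtain ⟨N, hN⟩ := eventually_atTop.1
      (hn.eventually (eventually_lt_nhds (show ∫ x, gK (j₁:ℝ) x ∂μ < ε/2 by linarith)))
    have hsmall : ∀ n : ℕ, ∃ j : ℕ, ∫ x, gK (j:ℝ) x ∂(μs n) < ε/2 := by
      intro n
      haveI := hfin n
      exact ((gK_tendsto_zero (μs n) (hmom n)).eventually (eventually_lt_nhds hε2)).exists
    choose J hJ using hsmall
    set jm : ℕ := (Finset.range N).sup J ⊔ j₁ with hjmdef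
    have hj₁le : j₁ ≤ jm := le_max_right _ _
    refine ⟨(jm:ℝ), ?_, fun n => ?_⟩
    · have : 1 ≤ jm := le_trans (le_max_right j₀ 1) hj₁le
      exact_mod_cast this
    · haveI := hfin n
      have hmono : ∀ j j' : ℕ, j ≤ j' → ∫ x, gK (j':ℝ) x ∂(μs n) ≤ ∫ x, gK (j:ℝ) x ∂(μs n) := by
        intro j j' hjj
        refine integral_mono (gK_int (by positivity) _ (hmom n))
          (gK_int (by positivity) _ (hmom n)) fun x => gK_anti (by exact_mod_cast hjj) x
      rcases le_or_gt N n with h | h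
      · exact le_of_lt (lt_of_le_of_lt (hmono j₁ jm hj₁le) (hN n h))
      · have hJn : J n ≤ jm :=
          le_trans (Finset.le_sup (Finset.mem_range.2 h)) (le_max_left _ _)
        exact le_of_lt (lt_of_le_of_lt (hmono (J n) jm hJn) (hJ n))
  -- step 2: L := 2K
  refine ⟨2*K, by linarith, fun n => ?_⟩
  haveI := hfin n
  have hset : MeasurableSet {x : ℝ | 2*K < |x|} :=
    measurableSet_lt measurable_const measurable_abs
  have step1 : ∫⁻ x in {x : ℝ | 2*K < |x|}, ENNReal.ofReal |x| ∂(μs n)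
      ≤ ∫⁻ x in {x : ℝ | 2*K < |x|}, ENNReal.ofReal (2 * gK K x) ∂(μs n) := by
    refine setLIntegral_mono' hset fun x hx => ?_
    have hx' : 2*K < |x| := hx
    refine ENNReal.ofReal_le_ofReal ?_
    have : gK K x = |x| - K := max_eq_left (by linarith)
    rw [this]; linarith
  have step2 : ∫⁻ x in {x : ℝ | 2*K < |x|}, ENNReal.ofReal (2 * gK K x) ∂(μs n)
      ≤ ∫⁻ x, ENNReal.ofReal (2 * gK K x) ∂(μs n) := setLIntegral_le_lintegral _ _
  have hint : Integrable (fun x => 2 * gK K x) (μs n) :=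
    (gK_int (by linarith) (μs n) (hmom n)).const_mul 2
  have step3 : ∫⁻ x, ENNReal.ofReal (2 * gK K x) ∂(μs n)
      = ENNReal.ofReal (∫ x, 2 * gK K x ∂(μs n)) :=
    (ofReal_integral_eq_lintegral_ofReal hint
      (ae_of_all _ fun x => by have := gK_nonneg K x; positivity)).symm
  have step4 : (∫ x, 2 * gK K x ∂(μs n)) ≤ ε := by
    rw [MeasureTheory.integral_const_mul]
    have := hKall n; linarith
  calc ∫⁻ x in {x : ℝ | 2*K < |x|}, ENNReal.ofReal |x| ∂(μs n)
      ≤ ∫⁻ x, ENNReal.ofReal (2 * gK K x) ∂(μs n) := step1.trans step2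
    _ = ENNReal.ofReal (∫ x, 2 * gK K x ∂(μs n)) := step3
    _ ≤ ENNReal.ofReal ε := ENNReal.ofReal_le_ofReal step4


set_option maxHeartbeats 2000000 in
theorem T1_convergence_dominating_measure
    (μs : ℕ → Measure ℝ) (hfin : ∀ n, IsFiniteMeasure (μs n))
    (hmom : ∀ n, Integrable (fun y => |y|) (μs n))
    (μ : Measure ℝ) [IsFiniteMeasure μ] (hμ : Integrable (fun y => |y|) μ)
    (hconv : T1Tendsto μs μ) :
    ∃ η : Measure ℝ, IsFiniteMeasure η ∧ Integrable (fun y => |y|) η ∧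
      (∀ n, ∀ φ : ℝ → ℝ, ConvexOn ℝ Set.univ φ → (∀ x, 0 ≤ φ x) →
        ∫⁻ x, ENNReal.ofReal (φ x) ∂(μs n) ≤ ∫⁻ x, ENNReal.ofReal (φ x) ∂η) ∧
      ∃ (K : ℕ → ℝ) (c : ℕ → ENNReal), (∀ m, 1 ≤ K m) ∧ Monotone K ∧
        η = Measure.sum (fun m =>
          c m • (Measure.dirac (-(K m)) + Measure.dirac (K m))) := by
  obtain ⟨hweak, habs⟩ := hconv
  -- uniform mass bound
  obtain ⟨Cm, hCm⟩ : ∃ C : ℝ, ∀ n, ((μs n) Set.univ).toReal ≤ C := by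
    have h1 : Tendsto (fun n => ((μs n) Set.univ).toReal) atTop (nhds ((μ Set.univ).toReal)) := by
      have := hweak (fun _ => (1:ℝ)) continuous_const ⟨1, fun x => by norm_num⟩
      simpa [integral_const, smul_eq_mul, Measure.real] using this
    obtain ⟨C, hC⟩ := h1.bddAbove_range
    exact ⟨C, fun n => hC ⟨n, rfl⟩⟩
  have hMn : ∀ n, (μs n) Set.univ ≤ ENNReal.ofReal Cm := by
    intro n; haveI := hfin n
    rw [← ENNReal.ofReal_toReal (measure_ne_top (μs n) _)]
    exact ENNReal.ofReal_le_ofReal (hCm n)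
  -- uniform moment bound
  obtain ⟨CM, hCM0⟩ : ∃ C : ℝ, ∀ n, (∫ x, |x| ∂(μs n)) ≤ C := by
    obtain ⟨C, hC⟩ := habs.bddAbove_range
    exact ⟨C, fun n => hC ⟨n, rfl⟩⟩
  have hCM : ∀ n, ∫⁻ x, ENNReal.ofReal |x| ∂(μs n) ≤ ENNReal.ofReal CM := by
    intro n
    rw [← ofReal_integral_eq_lintegral_ofReal (hmom n) (ae_of_all _ fun x => abs_nonneg x)]
    exact ENNReal.ofReal_le_ofReal (hCM0 n)
  -- uniform integrability choice
  have ui := ui_lemma μs hfin hmom μ hμ ⟨hweak, habs⟩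
  choose L hL1 hLtail using fun m : ℕ => ui ((1/2)^m) (by positivity)
  -- the K sequence
  set K : ℕ → ℝ := fun m => Nat.rec (L 0) (fun m Km => max (Km + 1) (L (m+1))) m with hKdef
  have hKsucc : ∀ m, K (m+1) = max (K m + 1) (L (m+1)) := fun m => rfl
  have hKL : ∀ m, L m ≤ K m := by
    intro m
    cases m with
    | zero => exact le_of_eq rfl
    | succ k => rw [hKsucc]; exact le_max_right _ _
  have hK1 : ∀ m, 1 ≤ K m := fun m => le_trans (hL1 m) (hKL m)
  have hKpos : ∀ m, 0 < K m := fun m => lt_of_lt_of_le one_pos (hK1 m)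
  have hKstep : ∀ m, K m + 1 ≤ K (m+1) := fun m => by rw [hKsucc]; exact le_max_left _ _
  have hKmono : Monotone K := monotone_nat_of_le_succ fun m => by linarith [hKstep m]
  have hKge : ∀ m : ℕ, (m:ℝ) + 1 ≤ K m := by
    intro m
    induction m with
    | zero => simpa using hK1 0
    | succ k ih => have := hKstep k; push_cast; linarith
  have htail : ∀ m n, ∫⁻ x in {x : ℝ | K m < |x|}, ENNReal.ofReal |x| ∂(μs n)
      ≤ ENNReal.ofReal ((1/2)^m) := by
    intro m n
    refine le_trans (lintegral_mono_set fun x hx => ?_) (hLtail m n)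
    exact lt_of_le_of_lt (hKL m) hx
  -- annuli
  set A : ℕ → Set ℝ := fun m => {x : ℝ | |x| ≤ K m ∧ ∀ m', m' < m → K m' < |x|} with hAdef
  have hAmeas : ∀ m, MeasurableSet (A m) := by
    intro m
    have h2 : A m = {x : ℝ | |x| ≤ K m} ∩ ⋂ m' ∈ {i : ℕ | i < m}, {x : ℝ | K m' < |x|} := by
      ext x; simp [hAdef]
    rw [h2]
    exact (measurableSet_le measurable_abs measurable_const).inter
      (MeasurableSet.biInter (Set.to_countable _)
        fun m' _ => measurableSet_lt measurable_const measurable_abs)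
  have hAdisj : Pairwise (Function.onFun Disjoint A) := by
    have key : ∀ a b : ℕ, a < b → Disjoint (A a) (A b) := by
      intro a b hab
      refine Set.disjoint_left.2 fun x hxa hxb => ?_
      exact absurd hxa.1 (not_le.2 (hxb.2 a hab))
    intro a b hab
    rcases hab.lt_or_gt with h | h
    · exact key a b h
    · exact (key b a h).symm
  have hAcover : (⋃ m, A m) = Set.univ := by
    ext x
    simp only [Set.mem_iUnion, Set.mem_univ, iff_true]
    have hex : ∃ m, |x| ≤ K m := by
      obtain ⟨m, hm⟩ := exists_nat_ge |x|
      exact ⟨m, le_trans hm (by linarith [hKge m])⟩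
    exact ⟨Nat.find hex, Nat.find_spec hex, fun m' hm' => not_le.1 (Nat.find_min hex hm')⟩
  -- the weights
  set d : ℕ → ENNReal := fun m => ⨆ n, ∫⁻ x in A m, ENNReal.ofReal |x| ∂(μs n) with hddef
  set c : ℕ → ENNReal := fun m =>
    (if m = 0 then ENNReal.ofReal Cm else 0) + d m / ENNReal.ofReal (K m) with hcdef
  have hdK : ∀ m n, ∫⁻ x in A m, ENNReal.ofReal |x| ∂(μs n) ≤ d m := by
    intro m n
    rw [hddef]
    exact le_iSup (fun n => ∫⁻ x in A m, ENNReal.ofReal |x| ∂(μs n)) n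
  have hd0 : d 0 ≤ ENNReal.ofReal CM :=
    iSup_le fun n => le_trans (setLIntegral_le_lintegral _ _) (hCM n)
  have hds : ∀ m, d (m+1) ≤ ENNReal.ofReal ((1/2)^m) := by
    intro m
    exact iSup_le fun n =>
      le_trans (lintegral_mono_set fun x hx => hx.2 m (Nat.lt_succ_self m)) (htail m n)
  have hKne0 : ∀ m, ENNReal.ofReal (K m) ≠ 0 := by
    intro m
    simp only [ne_eq, ENNReal.ofReal_eq_zero, not_le]
    exact hKpos m
  have hK1' : ∀ m, (1 : ENNReal) ≤ ENNReal.ofReal (K m) := fun m => by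
    rw [ENNReal.one_le_ofReal]; exact hK1 m
  -- the sum ∑ c m * K m is finite
  have hcK : ∀ m, c m * ENNReal.ofReal (K m)
      ≤ (if m = 0 then ENNReal.ofReal Cm * ENNReal.ofReal (K 0) else 0) + d m := by
    intro m
    rw [hcdef, add_mul, ENNReal.div_mul_cancel (hKne0 m) ENNReal.ofReal_ne_top]
    gcongr
    cases m with
    | zero => simp
    | succ k => simp
  have hgeom : ∑' m : ℕ, ENNReal.ofReal ((1/2:ℝ)^m) = 2 := by
    have h : ∀ m : ℕ, ENNReal.ofReal ((1/2:ℝ)^m) = (2⁻¹ : ENNReal)^m := by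
      intro m
      rw [ENNReal.ofReal_pow (by norm_num)]
      congr 1
      rw [one_div, ENNReal.ofReal_inv_of_pos (by norm_num)]
      norm_num
    simp only [h, ENNReal.tsum_geometric]
    rw [ENNReal.one_sub_inv_two]
    simp
  have hS : ∑' m, c m * ENNReal.ofReal (K m)
      ≤ ENNReal.ofReal Cm * ENNReal.ofReal (K 0) + (ENNReal.ofReal CM + 4) := by
    refine le_trans (ENNReal.tsum_le_tsum hcK) ?_
    rw [ENNReal.tsum_add]
    gcongr
    · rw [tsum_eq_single 0 (fun m' h => by simp [h])]
      simp
    · have hdm : ∀ m, d m ≤ (if m = 0 then ENNReal.ofReal CM else 0)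
          + 2 * ENNReal.ofReal ((1/2:ℝ)^m) := by
        intro m
        cases m with
        | zero => exact le_trans hd0 le_self_add
        | succ k =>
          refine le_trans (hds k) ?_
          have h2 : ((1/2:ℝ))^k = 2 * (1/2)^(k+1) := by ring
          rw [if_neg (Nat.succ_ne_zero k), zero_add, h2,
            ENNReal.ofReal_mul (by norm_num), ENNReal.ofReal_ofNat]
      refine le_trans (ENNReal.tsum_le_tsum hdm) ?_
      rw [ENNReal.tsum_add, tsum_eq_single 0 (fun m' h => by simp [h]), if_pos rfl,
        ENNReal.tsum_mul_left, hgeom]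
      norm_num
  have hSlt : ∑' m, c m * ENNReal.ofReal (K m) < ⊤ :=
    lt_of_le_of_lt hS (by
      refine ENNReal.add_lt_top.2 ⟨?_, ?_⟩
      · exact ENNReal.mul_lt_top ENNReal.ofReal_lt_top ENNReal.ofReal_lt_top
      · exact ENNReal.add_lt_top.2 ⟨ENNReal.ofReal_lt_top, by norm_num⟩)
  have hcle : ∀ m, c m ≤ c m * ENNReal.ofReal (K m) := fun m =>
    le_mul_of_one_le_right zero_le (hK1' m)
  -- generic integration against η
  have hηint : ∀ f : ℝ → ENNReal, Measurable f →
      ∫⁻ x, f x ∂(Measure.sum fun m => c m • (Measure.dirac (-(K m)) + Measure.dirac (K m)))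
        = ∑' m, c m * (f (-(K m)) + f (K m)) := by
    intro f hf
    rw [lintegral_sum_measure]
    refine tsum_congr fun m => ?_
    rw [lintegral_smul_measure, lintegral_add_measure, lintegral_dirac' _ hf,
      lintegral_dirac' _ hf, smul_eq_mul]
  refine ⟨Measure.sum fun m => c m • (Measure.dirac (-(K m)) + Measure.dirac (K m)),
    ?_, ?_, ?_, K, c, hK1, hKmono, rfl⟩
  · -- finite measure
    constructor
    rw [Measure.sum_apply _ MeasurableSet.univ]
    have heq : ∀ m, (c m • (Measure.dirac (-(K m)) + Measure.dirac (K m))) Set.univ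
        = 2 * c m := by
      intro m
      simp [Measure.smul_apply, Measure.add_apply, smul_eq_mul, two_mul, mul_add]
    calc ∑' m, (c m • (Measure.dirac (-(K m)) + Measure.dirac (K m))) Set.univ
        = ∑' m, 2 * c m := tsum_congr heq
      _ = 2 * ∑' m, c m := ENNReal.tsum_mul_left
      _ ≤ 2 * ∑' m, c m * ENNReal.ofReal (K m) := by gcongr; exact hcle _
      _ < ⊤ := ENNReal.mul_lt_top (by norm_num) hSlt
  · -- integrable |y|
    refine ⟨continuous_abs.aestronglyMeasurable, ?_⟩
    rw [hasFiniteIntegral_iff_norm]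
    have heq : (fun y : ℝ => ENNReal.ofReal ‖|y|‖) = fun y => ENNReal.ofReal |y| := by
      funext y; rw [Real.norm_eq_abs, abs_abs]
    rw [heq, hηint _ (measurable_abs.ennreal_ofReal)]
    have heq2 : ∀ m, c m * (ENNReal.ofReal |(-(K m))| + ENNReal.ofReal |K m|)
        = 2 * (c m * ENNReal.ofReal (K m)) := by
      intro m
      rw [abs_neg, abs_of_pos (hKpos m), two_mul]
      ring
    calc ∑' m, c m * (ENNReal.ofReal |(-(K m))| + ENNReal.ofReal |K m|)
        = ∑' m, 2 * (c m * ENNReal.ofReal (K m)) := tsum_congr heq2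
      _ = 2 * ∑' m, c m * ENNReal.ofReal (K m) := ENNReal.tsum_mul_left
      _ < ⊤ := ENNReal.mul_lt_top (by norm_num) hSlt
  · -- domination
    intro n φ hφ hφ0
    haveI := hfin n
    have hφc : Continuous φ :=
      continuousOn_univ.mp (hφ.continuousOn isOpen_univ)
    have hφm : Measurable fun x => ENNReal.ofReal (φ x) := hφc.measurable.ennreal_ofReal
    set F : ℝ → ENNReal := fun x => ENNReal.ofReal (φ x) with hFdef
    -- pointwise convex bound on each annulus
    have hkey : ∀ m x, x ∈ A m → φ x ≤ φ 0 + (|x| / K m) * (φ (K m) + φ (-(K m))) := by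
      intro m x hx
      have hx1 : |x| ≤ K m := hx.1
      have hKm : 0 < K m := hKpos m
      set t : ℝ := |x| / K m with htdef
      have ht0 : 0 ≤ t := by positivity
      have ht1 : t ≤ 1 := div_le_one_of_le₀ hx1 (le_of_lt hKm)
      have htK : t * K m = |x| := div_mul_cancel₀ _ (ne_of_gt hKm)
      rcases le_or_gt 0 x with hx0 | hx0
      · have hcvx := hφ.2 (Set.mem_univ (0:ℝ)) (Set.mem_univ (K m))
          (by linarith : (0:ℝ) ≤ 1 - t) ht0 (by ring)
        rw [smul_eq_mul, smul_eq_mul, smul_eq_mul, smul_eq_mul, mul_zero, zero_add, htK,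
          abs_of_nonneg hx0] at hcvx
        nlinarith [mul_nonneg ht0 (hφ0 (-(K m))), mul_nonneg ht0 (hφ0 0), hφ0 0]
      · have hcvx := hφ.2 (Set.mem_univ (0:ℝ)) (Set.mem_univ (-(K m)))
          (by linarith : (0:ℝ) ≤ 1 - t) ht0 (by ring)
        have htK' : t * (-(K m)) = x := by
          rw [mul_neg, htK, abs_of_neg hx0]; ring
        rw [smul_eq_mul, smul_eq_mul, smul_eq_mul, smul_eq_mul, mul_zero, zero_add,
          htK'] at hcvx
        nlinarith [mul_nonneg ht0 (hφ0 (K m)), mul_nonneg ht0 (hφ0 0), hφ0 0]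
    -- pointwise bound in ENNReal
    have hkey' : ∀ m x, x ∈ A m → F x ≤ ENNReal.ofReal (φ 0)
        + (F (K m) + F (-(K m))) / ENNReal.ofReal (K m) * ENNReal.ofReal |x| := by
      intro m x hx
      refine le_trans (ENNReal.ofReal_le_ofReal (hkey m x hx)) ?_
      have hnn : (0:ℝ) ≤ |x| / K m :=
        div_nonneg (abs_nonneg x) (le_of_lt (hKpos m))
      rw [ENNReal.ofReal_add (hφ0 0)
        (mul_nonneg hnn (by have := hφ0 (K m); have := hφ0 (-(K m)); linarith))]
      gcongr
      rw [ENNReal.ofReal_mul hnn, ENNReal.ofReal_add (hφ0 _) (hφ0 _),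
        ENNReal.ofReal_div_of_pos (hKpos m), div_eq_mul_inv, div_eq_mul_inv]
      ring_nf
      exact le_of_eq (by ring)
    -- integral over each annulus
    have hann : ∀ m, ∫⁻ x in A m, F x ∂(μs n)
        ≤ ENNReal.ofReal (φ 0) * (μs n) (A m)
          + (F (-(K m)) + F (K m)) * (d m / ENNReal.ofReal (K m)) := by
      intro m
      calc ∫⁻ x in A m, F x ∂(μs n)
          ≤ ∫⁻ x in A m, (ENNReal.ofReal (φ 0)
              + (F (K m) + F (-(K m))) / ENNReal.ofReal (K m) * ENNReal.ofReal |x|) ∂(μs n) :=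
            setLIntegral_mono' (hAmeas m) (hkey' m)
        _ = ENNReal.ofReal (φ 0) * (μs n) (A m)
              + (F (K m) + F (-(K m))) / ENNReal.ofReal (K m)
                * ∫⁻ x in A m, ENNReal.ofReal |x| ∂(μs n) := by
            rw [lintegral_add_left measurable_const, setLIntegral_const,
              lintegral_const_mul _ measurable_abs.ennreal_ofReal]
        _ ≤ ENNReal.ofReal (φ 0) * (μs n) (A m)
              + (F (K m) + F (-(K m))) / ENNReal.ofReal (K m) * d m := by
            gcongr
            exact hdK m n
        _ = ENNReal.ofReal (φ 0) * (μs n) (A m)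
              + (F (-(K m)) + F (K m)) * (d m / ENNReal.ofReal (K m)) := by
            rw [div_eq_mul_inv, div_eq_mul_inv]
            ring
    have hφ0bound : ENNReal.ofReal (φ 0) ≤ F (-(K 0)) + F (K 0) := by
      have hcvx := hφ.2 (Set.mem_univ (-(K 0))) (Set.mem_univ (K 0))
        (by norm_num : (0:ℝ) ≤ 1/2) (by norm_num : (0:ℝ) ≤ 1/2) (by norm_num)
      rw [smul_eq_mul, smul_eq_mul, smul_eq_mul, smul_eq_mul] at hcvx
      have h0 : (1/2 : ℝ) * (-(K 0)) + (1/2) * (K 0) = 0 := by ring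
      rw [h0] at hcvx
      refine le_trans (ENNReal.ofReal_le_ofReal ?_) (le_of_eq (ENNReal.ofReal_add (hφ0 _) (hφ0 _)))
      nlinarith [hφ0 (-(K 0)), hφ0 (K 0)]
    calc ∫⁻ x, F x ∂(μs n)
        = ∑' m, ∫⁻ x in A m, F x ∂(μs n) := by
          rw [← setLIntegral_univ, ← hAcover, lintegral_iUnion hAmeas hAdisj]
      _ ≤ ∑' m, (ENNReal.ofReal (φ 0) * (μs n) (A m)
            + (F (-(K m)) + F (K m)) * (d m / ENNReal.ofReal (K m))) :=
          ENNReal.tsum_le_tsum hann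
      _ = ENNReal.ofReal (φ 0) * (μs n) Set.univ
            + ∑' m, (F (-(K m)) + F (K m)) * (d m / ENNReal.ofReal (K m)) := by
          rw [ENNReal.tsum_add, ENNReal.tsum_mul_left, ← measure_iUnion hAdisj hAmeas, hAcover]
      _ ≤ (F (-(K 0)) + F (K 0)) * ENNReal.ofReal Cm
            + ∑' m, (F (-(K m)) + F (K m)) * (d m / ENNReal.ofReal (K m)) := by
          gcongr
          exact hMn n
      _ = ∑' m, (F (-(K m)) + F (K m)) * (if m = 0 then ENNReal.ofReal Cm else 0)
            + ∑' m, (F (-(K m)) + F (K m)) * (d m / ENNReal.ofReal (K m)) := by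
          congr 1
          rw [tsum_eq_single 0 (fun m' h => by simp [h])]
          simp
      _ = ∑' m, (F (-(K m)) + F (K m)) * c m := by
          rw [← ENNReal.tsum_add]
          exact tsum_congr fun m => (mul_add _ _ _).symm
      _ = ∑' m, c m * (F (-(K m)) + F (K m)) := tsum_congr fun m => mul_comm _ _
      _ = ∫⁻ x, F x ∂(Measure.sum fun m =>
            c m • (Measure.dirac (-(K m)) + Measure.dirac (K m))) := (hηint F hφm).symm
end
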